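/- arXiv:2605.06474 — 10 statements merged into one kernel-verified Lean document; each statement's English description precedes it below -/
import Mathlib

section
/- Deterministically, |Σ_{h=0}^{H} (1/n)·Σ_{i=1}^n ŵ_h^{(i)} r_h^{(i)} − Q_0(s₀,a₀)| ≤ Σ_{h=1}^{H} L̂_h(ŵ_h^{[n]}; ŵ_{h−1}^{[n]}) + Σ_{h=0}^{H} |(1/n)·Σ_{i=1}^n ŵ_h^{(i)} (Q_h(s_h^{(i)},a_h^{(i)}) − r_h^{(i)} − Q_{h+1}(s_{h+1}^{(i)},π))|. -/
open Finset

/-- deterministic error decomposition: for arbitrary data arrays,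
weights with `ŵ₀ ≡ 1`, `Q`-functions with `Q_{H+1} ≡ 0`, realizable classes
`Q_h ∈ F_h`, and any upper bounds `Lb h` on the empirical matching losses
(`Lb h ≥ L̂_h(ŵ_h; ŵ_{h−1})`, expressed by bounding every `f ∈ F_h`),
`|Σ_{h≤H} (1/n) Σᵢ ŵ_h⁽ⁱ⁾ r_h⁽ⁱ⁾ − Q₀(s₀,a₀)| ≤ Σ_{h=1}^H Lb h
+ Σ_{h=0}^H |(1/n) Σᵢ ŵ_h⁽ⁱ⁾ (Q_h(s_h⁽ⁱ⁾,a_h⁽ⁱ⁾) − r_h⁽ⁱ⁾ − Q_{h+1}(s_{h+1}⁽ⁱ⁾,π))|`. -/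
theorem stmt_1 (H n : ℕ) (hn : 0 < n)
    (S : ℕ → Type) (A : Type) [Fintype A]
    (s0 : S 0) (a0 : A)
    (pol : ∀ h, S h → A → ℝ)
    (hpol0 : ∀ h x b, 0 ≤ pol h x b) (hpol1 : ∀ h x, ∑ b, pol h x b = 1)
    (s : ∀ h : ℕ, Fin n → S h) (a : ℕ → Fin n → A) (r : ℕ → Fin n → ℝ)
    (hs0 : ∀ i, s 0 i = s0) (ha0 : ∀ i, a 0 i = a0) (hr0 : ∀ i, r 0 i = 0)
    (Q : ∀ h, S h → A → ℝ)
    (hQtop : ∀ x b, Q (H + 1) x b = 0)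
    (F : ∀ h, Set (S h → A → ℝ))
    (hQF : ∀ h ∈ Icc 1 H, Q h ∈ F h)
    (w : ℕ → Fin n → ℝ) (hw0 : ∀ i, w 0 i = 1)
    (Lb : ℕ → ℝ)
    (hLb : ∀ h ∈ Icc 1 H, ∀ f ∈ F h,
      |(n : ℝ)⁻¹ * ∑ i, w h i * f (s h i) (a h i) -
        (n : ℝ)⁻¹ * ∑ i, w (h - 1) i * ∑ b, pol h (s h i) b * f (s h i) b| ≤ Lb h) :
    |(∑ h ∈ range (H + 1), (n : ℝ)⁻¹ * ∑ i, w h i * r h i) - Q 0 s0 a0| ≤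
      (∑ h ∈ Icc 1 H, Lb h) +
      ∑ h ∈ range (H + 1), |(n : ℝ)⁻¹ * ∑ i, w h i *
        (Q h (s h i) (a h i) - r h i -
          ∑ b, pol (h + 1) (s (h + 1) i) b * Q (h + 1) (s (h + 1) i) b)| := by

  set Av : ℕ → ℝ := fun h => (n : ℝ)⁻¹ * ∑ i, w h i * Q h (s h i) (a h i) with hAv
  set Rv : ℕ → ℝ := fun h => (n : ℝ)⁻¹ * ∑ i, w h i * r h i with hRv
  set Cv : ℕ → ℝ := fun h => (n : ℝ)⁻¹ * ∑ i, w h i *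
      ∑ b, pol (h + 1) (s (h + 1) i) b * Q (h + 1) (s (h + 1) i) b with hCv
  have hA0 : Av 0 = Q 0 s0 a0 := by
    simp only [hAv, hs0, ha0, hw0, one_mul, Finset.sum_const, Finset.card_univ,
      Fintype.card_fin, nsmul_eq_mul]
    rw [← mul_assoc, inv_mul_cancel₀ (by exact_mod_cast hn.ne' : (n : ℝ) ≠ 0), one_mul]
  have hCH : Cv H = 0 := by simp [hCv, hQtop]
  have hB : ∀ h, (n : ℝ)⁻¹ * ∑ i, w h i *
      (Q h (s h i) (a h i) - r h i -
        ∑ b, pol (h + 1) (s (h + 1) i) b * Q (h + 1) (s (h + 1) i) b)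
      = Av h - Rv h - Cv h := by
    intro h
    simp only [hAv, hRv, hCv]
    rw [← mul_sub, ← mul_sub, ← Finset.sum_sub_distrib, ← Finset.sum_sub_distrib]
    congr 1
    apply Finset.sum_congr rfl
    intros
    ring
  have e1 : ∑ h ∈ Icc 1 H, Av h = ∑ i ∈ range H, Av (i + 1) := by
    rw [← Finset.Ico_add_one_right_eq_Icc, Finset.sum_Ico_eq_sum_range]
    simp [add_comm]
  have e2 : ∑ h ∈ Icc 1 H, Cv (h - 1) = ∑ i ∈ range H, Cv i := by
    rw [← Finset.Ico_add_one_right_eq_Icc, Finset.sum_Ico_eq_sum_range]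
    simp
  have key : (∑ h ∈ range (H + 1), Rv h) - Q 0 s0 a0
      = (∑ h ∈ Icc 1 H, (Av h - Cv (h - 1)))
        - ∑ h ∈ range (H + 1), (Av h - Rv h - Cv h) := by
    rw [Finset.sum_sub_distrib, e1, e2, Finset.sum_sub_distrib, Finset.sum_sub_distrib,
      Finset.sum_range_succ' Av H, Finset.sum_range_succ Cv H, hA0, hCH]
    ring
  have hgoal2 : ∀ h, |(n : ℝ)⁻¹ * ∑ i, w h i *
      (Q h (s h i) (a h i) - r h i -
        ∑ b, pol (h + 1) (s (h + 1) i) b * Q (h + 1) (s (h + 1) i) b)|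
      = |Av h - Rv h - Cv h| := fun h => by rw [hB h]
  calc |(∑ h ∈ range (H + 1), Rv h) - Q 0 s0 a0|
      = |(∑ h ∈ Icc 1 H, (Av h - Cv (h - 1)))
          - ∑ h ∈ range (H + 1), (Av h - Rv h - Cv h)| := by rw [key]
    _ ≤ |∑ h ∈ Icc 1 H, (Av h - Cv (h - 1))|
          + |∑ h ∈ range (H + 1), (Av h - Rv h - Cv h)| := abs_sub _ _
    _ ≤ (∑ h ∈ Icc 1 H, |Av h - Cv (h - 1)|)
          + ∑ h ∈ range (H + 1), |Av h - Rv h - Cv h| :=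
        add_le_add (Finset.abs_sum_le_sum_abs _ _) (Finset.abs_sum_le_sum_abs _ _)
    _ ≤ (∑ h ∈ Icc 1 H, Lb h)
          + ∑ h ∈ range (H + 1), |Av h - Rv h - Cv h| := by
        apply add_le_add_left
        apply Finset.sum_le_sum
        intro h hh
        have h1 : 1 ≤ h := (Finset.mem_Icc.mp hh).1
        obtain ⟨k, rfl⟩ := Nat.exists_eq_succ_of_ne_zero (Nat.one_le_iff_ne_zero.mp h1)
        have := hLb (k + 1) hh (Q (k + 1)) (hQF _ hh)
        simp only [Nat.add_sub_cancel] at this ⊢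
        simp only [hAv, hCv]
        exact this
    _ = (∑ h ∈ Icc 1 H, Lb h)
          + ∑ h ∈ range (H + 1), |(n : ℝ)⁻¹ * ∑ i, w h i *
            (Q h (s h i) (a h i) - r h i -
              ∑ b, pol (h + 1) (s (h + 1) i) b * Q (h + 1) (s (h + 1) i) b)| := by
        congr 1
        exact Finset.sum_congr rfl fun h _ => (hgoal2 h).symm
end

section
/- With the FQE coefficients θ_h and the Q-MMR weights ŵ_h^{(i)} defined as below, the two estimators coincide: Σ_{h=1}^{H} (1/n)·Σ_{i=1}^n ŵ_h^{(i)} r_h^{(i)} = (1/n)·Σ_{i=1}^n (v_1^{(i)})ᵀ θ_1. Moreover, for each h, ŵ_h^{[n]} = (ŵ_h^{(1)},…,ŵ_h^{(n)}) is the unique vector of minimal Euclidean norm among all w ∈ ℝ^n satisfying (1/n)·Σ_{i=1}^n w_i u_h^{(i)} = ψ̂_h. -/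
open Matrix Finset

theorem outer_mulVec_aux {d m : ℕ} (a : Fin m → Fin d → ℝ) (c : ℝ) (x : Fin d → ℝ) :
    (c • ∑ i, vecMulVec (a i) (a i)) *ᵥ x = c • ∑ i, (a i ⬝ᵥ x) • a i := by
  ext j
  simp only [Matrix.mulVec, Matrix.smul_apply, Finset.sum_apply, Matrix.sum_apply, vecMulVec,
    Matrix.of_apply, dotProduct, Pi.smul_apply, smul_eq_mul, Finset.sum_mul, Finset.mul_sum]
  rw [Finset.sum_comm]
  refine Finset.sum_congr rfl fun i _ => Finset.sum_congr rfl fun k _ => ?_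
  ring

theorem dot_expand_aux {d m : ℕ} (a : Fin m → Fin d → ℝ) (g : Fin m → ℝ) (c : ℝ) (y : Fin d → ℝ) :
    (c • ∑ i, g i • a i) ⬝ᵥ y = c * ∑ i, g i * (a i ⬝ᵥ y) := by
  simp only [dotProduct, Pi.smul_apply, Finset.sum_apply, smul_eq_mul, Finset.sum_mul,
    Finset.mul_sum]
  rw [Finset.sum_comm]
  refine Finset.sum_congr rfl fun i _ => Finset.sum_congr rfl fun k _ => ?_
  ring

/-- in the linear setting with invertible empirical covariances,
the Q-MMR estimator coincides with the linear FQE estimator, and for each level `h`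
the Q-MMR weight vector is the unique minimal-Euclidean-norm solution of the
empirical moment-matching constraint `(1/n) Σᵢ wᵢ u_h⁽ⁱ⁾ = ψ̂_h`. -/
theorem stmt_6 (H d n : ℕ) (hn : 0 < n)
    (u v : ℕ → Fin n → Fin d → ℝ) (r : ℕ → Fin n → ℝ)
    (hvtop : ∀ i, v (H + 1) i = 0)
    (Shat : ℕ → Matrix (Fin d) (Fin d) ℝ)
    (hShat : ∀ h, Shat h = (n : ℝ)⁻¹ • ∑ i, vecMulVec (u h i) (u h i))
    (hinv : ∀ h ∈ Icc 1 H, IsUnit (Shat h).det)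
    (θ : ℕ → Fin d → ℝ)
    (hθtop : θ (H + 1) = 0)
    (hθ : ∀ h ∈ Icc 1 H,
      θ h = (Shat h)⁻¹ *ᵥ ((n : ℝ)⁻¹ • ∑ i, (r h i + v (h + 1) i ⬝ᵥ θ (h + 1)) • u h i))
    (w : ℕ → Fin n → ℝ) (hw0 : ∀ i, w 0 i = 1)
    (ψ : ℕ → Fin d → ℝ)
    (hψ : ∀ h ∈ Icc 1 H, ψ h = (n : ℝ)⁻¹ • ∑ i, w (h - 1) i • v h i)
    (hwdef : ∀ h ∈ Icc 1 H, ∀ i, w h i = u h i ⬝ᵥ (Shat h)⁻¹ *ᵥ ψ h) :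
    (∑ h ∈ Icc 1 H, (n : ℝ)⁻¹ * ∑ i, w h i * r h i
        = (n : ℝ)⁻¹ * ∑ i, v 1 i ⬝ᵥ θ 1) ∧
    ∀ h ∈ Icc 1 H,
      ((n : ℝ)⁻¹ • ∑ i, w h i • u h i = ψ h) ∧
      ∀ w' : Fin n → ℝ, ((n : ℝ)⁻¹ • ∑ i, w' i • u h i = ψ h) →
        (∑ i, w h i ^ 2 ≤ ∑ i, w' i ^ 2 ∧
          (∑ i, w' i ^ 2 = ∑ i, w h i ^ 2 → w' = fun i => w h i)) := by
  -- feasibility of the Q-MMR weights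
  have hfeas : ∀ h ∈ Icc 1 H, (n : ℝ)⁻¹ • ∑ i, w h i • u h i = ψ h := by
    intro h hh
    calc (n : ℝ)⁻¹ • ∑ i, w h i • u h i
        = (n : ℝ)⁻¹ • ∑ i, (u h i ⬝ᵥ (Shat h)⁻¹ *ᵥ ψ h) • u h i := by
          refine congrArg _ (Finset.sum_congr rfl fun i _ => ?_)
          rw [hwdef h hh i]
      _ = ((n : ℝ)⁻¹ • ∑ i, vecMulVec (u h i) (u h i)) *ᵥ ((Shat h)⁻¹ *ᵥ ψ h) :=
          (outer_mulVec_aux _ _ _).symm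
      _ = Shat h *ᵥ ((Shat h)⁻¹ *ᵥ ψ h) := by rw [← hShat]
      _ = ψ h := by
          rw [Matrix.mulVec_mulVec, Matrix.mul_nonsing_inv _ (hinv h hh), Matrix.one_mulVec]
  -- symmetry of the covariance matrices and their inverses
  have hsym : ∀ h, (Shat h)ᵀ = Shat h := by
    intro h
    ext i j
    rw [hShat]
    simp only [Matrix.transpose_apply, Matrix.smul_apply, Matrix.sum_apply, vecMulVec,
      Matrix.of_apply, smul_eq_mul]
    rw [Finset.sum_congr rfl fun k _ => mul_comm (u h k j) (u h k i)]
  have hinvsym : ∀ h ∈ Icc 1 H, ((Shat h)⁻¹)ᵀ = (Shat h)⁻¹ := by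
    intro h hh
    rw [Matrix.transpose_nonsing_inv, hsym h]
  -- one-step identity
  have hstep : ∀ h ∈ Icc 1 H,
      (n : ℝ)⁻¹ * ∑ i, w (h - 1) i * (v h i ⬝ᵥ θ h)
        = (n : ℝ)⁻¹ * ∑ i, w h i * r h i
          + (n : ℝ)⁻¹ * ∑ i, w h i * (v (h + 1) i ⬝ᵥ θ (h + 1)) := by
    intro h hh
    have e1 : ψ h ⬝ᵥ θ h = (n : ℝ)⁻¹ * ∑ i, w (h - 1) i * (v h i ⬝ᵥ θ h) := by
      rw [hψ h hh]; exact dot_expand_aux _ _ _ _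
    calc (n : ℝ)⁻¹ * ∑ i, w (h - 1) i * (v h i ⬝ᵥ θ h)
        = ψ h ⬝ᵥ θ h := e1.symm
      _ = ψ h ⬝ᵥ (Shat h)⁻¹ *ᵥ
            ((n : ℝ)⁻¹ • ∑ i, (r h i + v (h + 1) i ⬝ᵥ θ (h + 1)) • u h i) := by
          rw [← hθ h hh]
      _ = ((Shat h)⁻¹ *ᵥ ψ h) ⬝ᵥ
            ((n : ℝ)⁻¹ • ∑ i, (r h i + v (h + 1) i ⬝ᵥ θ (h + 1)) • u h i) := by
          rw [Matrix.dotProduct_mulVec, ← Matrix.mulVec_transpose, hinvsym h hh]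
      _ = ((n : ℝ)⁻¹ • ∑ i, (r h i + v (h + 1) i ⬝ᵥ θ (h + 1)) • u h i) ⬝ᵥ
            ((Shat h)⁻¹ *ᵥ ψ h) := dotProduct_comm _ _
      _ = (n : ℝ)⁻¹ * ∑ i,
            (r h i + v (h + 1) i ⬝ᵥ θ (h + 1)) * (u h i ⬝ᵥ (Shat h)⁻¹ *ᵥ ψ h) :=
          dot_expand_aux _ _ _ _
      _ = (n : ℝ)⁻¹ * ∑ i, w h i * r h i
          + (n : ℝ)⁻¹ * ∑ i, w h i * (v (h + 1) i ⬝ᵥ θ (h + 1)) := by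
          rw [← mul_add, ← Finset.sum_add_distrib]
          refine congrArg _ (Finset.sum_congr rfl fun i _ => ?_)
          rw [← hwdef h hh i]
          ring
  -- telescoping
  have hF : ∀ h ∈ Icc 1 H, (n : ℝ)⁻¹ * ∑ i, w h i * r h i
      = (fun k => (n : ℝ)⁻¹ * ∑ i, w (k - 1) i * (v k i ⬝ᵥ θ k)) h
        - (fun k => (n : ℝ)⁻¹ * ∑ i, w (k - 1) i * (v k i ⬝ᵥ θ k)) (h + 1) := by
    intro h hh
    have := hstep h hh
    simp only [Nat.add_sub_cancel]
    linarith
  constructor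
  · rw [Finset.sum_congr rfl hF, ← Finset.Ico_add_one_right_eq_Icc, Finset.sum_Ico_eq_sum_range]
    have hred : ∀ k ∈ range (H + 1 - 1),
        ((fun k => (n : ℝ)⁻¹ * ∑ i, w (k - 1) i * (v k i ⬝ᵥ θ k)) (1 + k)
          - (fun k => (n : ℝ)⁻¹ * ∑ i, w (k - 1) i * (v k i ⬝ᵥ θ k)) (1 + k + 1))
        = (n : ℝ)⁻¹ * ∑ i, w k i * (v (k + 1) i ⬝ᵥ θ (k + 1))
          - (n : ℝ)⁻¹ * ∑ i, w (k + 1) i * (v (k + 1 + 1) i ⬝ᵥ θ (k + 1 + 1)) := by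
      intro k _
      have h1 : 1 + k = k + 1 := by omega
      simp only [h1, Nat.add_sub_cancel]
    have htel : ∑ k ∈ range H,
        ((n : ℝ)⁻¹ * ∑ i, w k i * (v (k + 1) i ⬝ᵥ θ (k + 1))
          - (n : ℝ)⁻¹ * ∑ i, w (k + 1) i * (v (k + 1 + 1) i ⬝ᵥ θ (k + 1 + 1)))
        = (n : ℝ)⁻¹ * ∑ i, w 0 i * (v 1 i ⬝ᵥ θ 1)
          - (n : ℝ)⁻¹ * ∑ i, w H i * (v (H + 1) i ⬝ᵥ θ (H + 1)) :=
      Finset.sum_range_sub'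
        (fun k => (n : ℝ)⁻¹ * ∑ i, w k i * (v (k + 1) i ⬝ᵥ θ (k + 1))) H
    rw [Finset.sum_congr rfl hred]
    simp only [Nat.add_sub_cancel]
    rw [htel]
    simp [hw0, hvtop]
  -- minimal-norm property
  · intro h hh
    refine ⟨hfeas h hh, ?_⟩
    intro w' hw'
    have hne : ((n : ℝ)⁻¹ : ℝ) ≠ 0 := inv_ne_zero (Nat.cast_ne_zero.mpr hn.ne')
    have h1 : (n : ℝ)⁻¹ • ∑ i, w' i • u h i = (n : ℝ)⁻¹ • ∑ i, w h i • u h i := by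
      rw [hw', hfeas h hh]
    have h2 : ∑ i, w' i • u h i = ∑ i, w h i • u h i :=
      smul_right_injective (Fin d → ℝ) hne h1
    have hsum0 : ∑ i, (w' i - w h i) • u h i = (0 : Fin d → ℝ) := by
      calc ∑ i, (w' i - w h i) • u h i
          = ∑ i, (w' i • u h i - w h i • u h i) :=
            Finset.sum_congr rfl fun i _ => sub_smul _ _ _
        _ = ∑ i, w' i • u h i - ∑ i, w h i • u h i := Finset.sum_sub_distrib _ _
        _ = 0 := by rw [h2, sub_self]
    have horth : ∑ i, (w' i - w h i) * w h i = 0 := by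
      have hd := dot_expand_aux (u h) (fun i => w' i - w h i) (1 : ℝ)
        ((Shat h)⁻¹ *ᵥ ψ h)
      rw [one_smul, one_mul] at hd
      calc ∑ i, (w' i - w h i) * w h i
          = ∑ i, (w' i - w h i) * (u h i ⬝ᵥ (Shat h)⁻¹ *ᵥ ψ h) :=
            Finset.sum_congr rfl fun i _ => by rw [hwdef h hh i]
        _ = (∑ i, (w' i - w h i) • u h i) ⬝ᵥ ((Shat h)⁻¹ *ᵥ ψ h) := hd.symm
        _ = 0 := by rw [hsum0, zero_dotProduct]
    have hdecomp : ∑ i, w' i ^ 2 = ∑ i, w h i ^ 2 + ∑ i, (w' i - w h i) ^ 2 := by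
      calc ∑ i, w' i ^ 2
          = ∑ i, (w h i ^ 2 + ((w' i - w h i) ^ 2 + 2 * ((w' i - w h i) * w h i))) :=
            Finset.sum_congr rfl fun i _ => by ring
        _ = ∑ i, w h i ^ 2 + (∑ i, (w' i - w h i) ^ 2
              + ∑ i, 2 * ((w' i - w h i) * w h i)) := by
            rw [Finset.sum_add_distrib, Finset.sum_add_distrib]
        _ = ∑ i, w h i ^ 2 + ∑ i, (w' i - w h i) ^ 2 := by
            rw [← Finset.mul_sum, horth, mul_zero, add_zero]
    have hnn : (0 : ℝ) ≤ ∑ i, (w' i - w h i) ^ 2 :=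
      Finset.sum_nonneg fun i _ => sq_nonneg _
    refine ⟨by linarith, ?_⟩
    intro heq
    have hz : ∑ i, (w' i - w h i) ^ 2 = 0 := by linarith
    funext i
    have hi := (Finset.sum_eq_zero_iff_of_nonneg fun i (_ : i ∈ univ) => sq_nonneg _).mp hz i
      (Finset.mem_univ i)
    have := (pow_eq_zero_iff two_ne_zero).mp hi
    linarith [sub_eq_zero.mp this]
end

section
/- Define V_h := (1/n)·Σ_{i=1}^n ŵ_{h−1}^{(i)} (v_h^{(i)})ᵀ θ_h for h = 1,…,H and V_{H+1} := 0. Then for every h ∈ {1,…,H}, V_h = (1/n)·Σ_{i=1}^n ŵ_h^{(i)} r_h^{(i)} + V_{h+1}. -/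
/-!
Write `θ_h = Σ̂_h⁻¹ (1/n) Σᵢ yᵢ u_h⁽ⁱ⁾` with regression targets `yᵢ = r_h⁽ⁱ⁾ + (v_{h+1}⁽ⁱ⁾)ᵀ θ_{h+1}`.
Since `Σ̂_h` is symmetric, so is `Σ̂_h⁻¹`, hence `ψ̂_hᵀ Σ̂_h⁻¹ u_h⁽ⁱ⁾ = ŵ_h⁽ⁱ⁾`: pairing with `ψ̂_h`
turns the regression into a reweighting, `V_h = ψ̂_hᵀ θ_h = (1/n) Σᵢ ŵ_h⁽ⁱ⁾ yᵢ`.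
The part of this average coming from `θ_{h+1}` is `V_{h+1}` (and `0` at `h = H`, where `θ_{H+1} = 0`).
-/

open Matrix Finset

namespace Matrix

variable {ι m R : Type*} [CommSemiring R]

theorem IsSymm.dotProduct_mulVec_comm [Fintype m] {A : Matrix m m R} (hA : A.IsSymm) (x y : m → R) :
    x ⬝ᵥ A *ᵥ y = y ⬝ᵥ A *ᵥ x := by
  simpa only [hA.eq] using dotProduct_transpose_mulVec A x y

theorem isSymm_sum_vecMulVec_self (s : Finset ι) (u : ι → m → R) :
    (∑ i ∈ s, vecMulVec (u i) (u i)).IsSymm :=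
  (transpose_sum s _).trans (sum_congr rfl fun i _ => transpose_vecMulVec (u i) (u i))

theorem IsSymm.dotProduct_mulVec_sum_smul [Fintype m] {S : Matrix m m R} (hS : S.IsSymm) (ψ : m → R)
    (s : Finset ι) (y : ι → R) (u : ι → m → R) :
    ψ ⬝ᵥ S *ᵥ ∑ i ∈ s, y i • u i = ∑ i ∈ s, (u i ⬝ᵥ S *ᵥ ψ) * y i := by
  rw [mulVec_sum, dotProduct_sum]
  refine sum_congr rfl fun i _ => ?_
  rw [mulVec_smul, dotProduct_smul, hS.dotProduct_mulVec_comm, smul_eq_mul, mul_comm]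

theorem sum_smul_dotProduct [Fintype m] (s : Finset ι) (c : ι → R) (x : ι → m → R) (y : m → R) :
    (∑ i ∈ s, c i • x i) ⬝ᵥ y = ∑ i ∈ s, c i * (x i ⬝ᵥ y) := by
  simp only [sum_dotProduct, smul_dotProduct, smul_eq_mul]

end Matrix

theorem stmt_7_general (H d n : ℕ)
    (u v : ℕ → Fin n → Fin d → ℝ) (r : ℕ → Fin n → ℝ)
    (Shat : ℕ → Matrix (Fin d) (Fin d) ℝ)
    (hShat : ∀ h, Shat h = (n : ℝ)⁻¹ • ∑ i, vecMulVec (u h i) (u h i))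
    (θ : ℕ → Fin d → ℝ)
    (hθtop : θ (H + 1) = 0)
    (hθ : ∀ h ∈ Icc 1 H,
      θ h = (Shat h)⁻¹ *ᵥ ((n : ℝ)⁻¹ • ∑ i, (r h i + v (h + 1) i ⬝ᵥ θ (h + 1)) • u h i))
    (w : ℕ → Fin n → ℝ)
    (ψ : ℕ → Fin d → ℝ)
    (hψ : ∀ h ∈ Icc 1 H, ψ h = (n : ℝ)⁻¹ • ∑ i, w (h - 1) i • v h i)
    (hwdef : ∀ h ∈ Icc 1 H, ∀ i, w h i = u h i ⬝ᵥ (Shat h)⁻¹ *ᵥ ψ h)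
    (V : ℕ → ℝ)
    (hV : ∀ h ∈ Icc 1 H, V h = (n : ℝ)⁻¹ * ∑ i, w (h - 1) i * (v h i ⬝ᵥ θ h))
    (hVtop : V (H + 1) = 0) :
    ∀ h ∈ Icc 1 H, V h = (n : ℝ)⁻¹ * ∑ i, w h i * r h i + V (h + 1) := by
  intro h hh
  have hSymm : (Shat h)⁻¹.IsSymm := by
    rw [hShat]
    exact ((isSymm_sum_vecMulVec_self _ _).smul _).inv
  have hnext : (n : ℝ)⁻¹ * ∑ i, w h i * (v (h + 1) i ⬝ᵥ θ (h + 1)) = V (h + 1) := by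
    rcases (mem_Icc.mp hh).2.eq_or_lt with rfl | hlt
    · simp [hθtop, hVtop]
    · simpa using (hV (h + 1) (mem_Icc.mpr ⟨Nat.le_add_left 1 h, hlt⟩)).symm
  calc V h = ψ h ⬝ᵥ θ h := by
        rw [hV h hh, hψ h hh, smul_dotProduct, sum_smul_dotProduct, smul_eq_mul]
    _ = (n : ℝ)⁻¹ * ∑ i, w h i * (r h i + v (h + 1) i ⬝ᵥ θ (h + 1)) := by
        rw [hθ h hh, mulVec_smul, dotProduct_smul, hSymm.dotProduct_mulVec_sum_smul, smul_eq_mul]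
        simp only [← hwdef h hh]
    _ = (n : ℝ)⁻¹ * ∑ i, w h i * r h i
          + (n : ℝ)⁻¹ * ∑ i, w h i * (v (h + 1) i ⬝ᵥ θ (h + 1)) := by
        simp only [mul_add, sum_add_distrib]
    _ = (n : ℝ)⁻¹ * ∑ i, w h i * r h i + V (h + 1) := by rw [hnext]

/-- with `V_h := (1/n) Σᵢ ŵ_{h−1}⁽ⁱ⁾ (v_h⁽ⁱ⁾)ᵀ θ_h` and `V_{H+1} := 0`,
the recursion `V_h = (1/n) Σᵢ ŵ_h⁽ⁱ⁾ r_h⁽ⁱ⁾ + V_{h+1}` holds for every `h ∈ {1,…,H}`,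
where `θ` are the linear FQE coefficients and `ŵ` the Q-MMR weights. -/
theorem stmt_7 (H d n : ℕ) (hn : 0 < n)
    (u v : ℕ → Fin n → Fin d → ℝ) (r : ℕ → Fin n → ℝ)
    (hvtop : ∀ i, v (H + 1) i = 0)
    (Shat : ℕ → Matrix (Fin d) (Fin d) ℝ)
    (hShat : ∀ h, Shat h = (n : ℝ)⁻¹ • ∑ i, vecMulVec (u h i) (u h i))
    (hinv : ∀ h ∈ Icc 1 H, IsUnit (Shat h).det)
    (θ : ℕ → Fin d → ℝ)
    (hθtop : θ (H + 1) = 0)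
    (hθ : ∀ h ∈ Icc 1 H,
      θ h = (Shat h)⁻¹ *ᵥ ((n : ℝ)⁻¹ • ∑ i, (r h i + v (h + 1) i ⬝ᵥ θ (h + 1)) • u h i))
    (w : ℕ → Fin n → ℝ) (hw0 : ∀ i, w 0 i = 1)
    (ψ : ℕ → Fin d → ℝ)
    (hψ : ∀ h ∈ Icc 1 H, ψ h = (n : ℝ)⁻¹ • ∑ i, w (h - 1) i • v h i)
    (hwdef : ∀ h ∈ Icc 1 H, ∀ i, w h i = u h i ⬝ᵥ (Shat h)⁻¹ *ᵥ ψ h)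
    (V : ℕ → ℝ)
    (hV : ∀ h ∈ Icc 1 H, V h = (n : ℝ)⁻¹ * ∑ i, w (h - 1) i * (v h i ⬝ᵥ θ h))
    (hVtop : V (H + 1) = 0) :
    ∀ h ∈ Icc 1 H, V h = (n : ℝ)⁻¹ * ∑ i, w h i * r h i + V (h + 1) :=
  stmt_7_general H d n u v r Shat hShat θ hθtop hθ w ψ hψ hwdef V hV hVtop
end

section
/- Under full empirical support, for every h ∈ {1,…,H} the unique vector ŵ_h^{[n]} ∈ ℝ^n of minimal Euclidean norm satisfying the exact tabular matching constraints — (1/n)·Σ_{i=1}^n ŵ_h^{(i)}·1{s_h^{(i)}=s, a_h^{(i)}=a} = (1/n)·Σ_{i=1}^n ŵ_{h−1}^{(i)}·1{s_h^{(i)}=s}·π(a|s) for all (s,a) ∈ S_h×A, where ŵ_0^{(i)} := 1 — is given by ŵ_h^{(i)} = d̂_h^π(s_h^{(i)},a_h^{(i)}) / d̂_h^D(s_h^{(i)},a_h^{(i)}); consequently, the Q-MMR estimate equals the certainty-equivalence value in the empirical MDP: Σ_{h=1}^{H} (1/n)·Σ_{i=1}^n ŵ_h^{(i)} r_h^{(i)}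 = Σ_{h=1}^{H} Σ_{(s,a)∈S_h×A} d̂_h^π(s,a)·r̂_h(s,a). -/
open Finset

lemma fiber_sum {σ α : Type*} [Fintype σ] [DecidableEq σ] [Fintype α] [DecidableEq α]
    {n : ℕ} (s : Fin n → σ) (a : Fin n → α) (f : σ → α → ℝ) (g : Fin n → ℝ) :
    ∑ i, f (s i) (a i) * g i =
      ∑ x : σ, ∑ b : α, f x b * ∑ i, (if s i = x ∧ a i = b then g i else 0) := by
  calc ∑ i, f (s i) (a i) * g i
      = ∑ i, ∑ x : σ, ∑ b : α, (if s i = x ∧ a i = b then f x b * g i else 0) := by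
        refine Finset.sum_congr rfl fun i _ => ?_
        simp [ite_and]
    _ = ∑ x : σ, ∑ i, ∑ b : α, (if s i = x ∧ a i = b then f x b * g i else 0) :=
        Finset.sum_comm
    _ = ∑ x : σ, ∑ b : α, ∑ i, (if s i = x ∧ a i = b then f x b * g i else 0) :=
        Finset.sum_congr rfl fun x _ => Finset.sum_comm
    _ = ∑ x : σ, ∑ b : α, f x b * ∑ i, (if s i = x ∧ a i = b then g i else 0) := by
        simp_rw [Finset.mul_sum, mul_ite, mul_zero]


/-- tabular Q-MMR = certainty equivalence: under full empirical
support, for each level `h` the unique minimal-Euclidean-norm solution of the exact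
tabular matching constraints is `ŵ_h⁽ⁱ⁾ = d̂_h^π(s_h⁽ⁱ⁾,a_h⁽ⁱ⁾)/d̂_h^D(s_h⁽ⁱ⁾,a_h⁽ⁱ⁾)`,
and the Q-MMR estimate equals the certainty-equivalence value in the empirical MDP. -/
theorem stmt_8 (H n : ℕ) (hn : 0 < n) (hH : 1 ≤ H)
    (S : ℕ → Type) [∀ h, Fintype (S h)] [∀ h, DecidableEq (S h)]
    (A : Type) [Fintype A] [DecidableEq A]
    (pol : ∀ h, S h → A → ℝ)
    (hpol0 : ∀ h x b, 0 ≤ pol h x b) (hpol1 : ∀ h x, ∑ b, pol h x b = 1)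
    (s : ∀ h : ℕ, Fin n → S h) (a : ℕ → Fin n → A) (r : ℕ → Fin n → ℝ)
    (dD : ∀ h, S h → A → ℝ)
    (hdD : ∀ h x b, dD h x b = (n : ℝ)⁻¹ * ∑ i, if s h i = x ∧ a h i = b then (1 : ℝ) else 0)
    (hfull : ∀ h ∈ Icc 1 H, ∀ (x : S h) (b : A), 0 < dD h x b)
    (rhat : ∀ h, S h → A → ℝ)
    (hrhat : ∀ h x b, rhat h x b =
      (∑ i, if s h i = x ∧ a h i = b then r h i else 0) /
        ∑ i, if s h i = x ∧ a h i = b then (1 : ℝ) else 0)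
    (Phat : ∀ h, S h → A → S (h + 1) → ℝ)
    (hPhat : ∀ h x b y, Phat h x b y =
      (∑ i, if s h i = x ∧ a h i = b ∧ s (h + 1) i = y then (1 : ℝ) else 0) /
        ∑ i, if s h i = x ∧ a h i = b then (1 : ℝ) else 0)
    (dpi : ∀ h, S h → A → ℝ)
    (hdpi1 : ∀ x b, dpi 1 x b =
      pol 1 x b * ((n : ℝ)⁻¹ * ∑ i, if s 1 i = x then (1 : ℝ) else 0))
    (hdpiStep : ∀ h, ∀ (x : S (h + 2)) (b : A), dpi (h + 2) x b =
      pol (h + 2) x b * ∑ p : S (h + 1) × A, dpi (h + 1) p.1 p.2 * Phat (h + 1) p.1 p.2 x)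
    (w : ℕ → Fin n → ℝ)
    (hw0 : ∀ i, w 0 i = 1)
    (hwdef : ∀ h ∈ Icc 1 H, ∀ i,
      w h i = dpi h (s h i) (a h i) / dD h (s h i) (a h i)) :
    (∀ h ∈ Icc 1 H,
      (∀ (x : S h) (b : A),
        (n : ℝ)⁻¹ * ∑ i, w h i * (if s h i = x ∧ a h i = b then (1 : ℝ) else 0) =
          (n : ℝ)⁻¹ * ∑ i, w (h - 1) i * (if s h i = x then (1 : ℝ) else 0) * pol h x b) ∧
      (∀ w' : Fin n → ℝ,
        (∀ (x : S h) (b : A),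
          (n : ℝ)⁻¹ * ∑ i, w' i * (if s h i = x ∧ a h i = b then (1 : ℝ) else 0) =
            (n : ℝ)⁻¹ * ∑ i, w (h - 1) i * (if s h i = x then (1 : ℝ) else 0) * pol h x b) →
        (∑ i, w h i ^ 2 ≤ ∑ i, w' i ^ 2 ∧
          (∑ i, w' i ^ 2 = ∑ i, w h i ^ 2 → w' = fun i => w h i)))) ∧
    ∑ h ∈ Icc 1 H, (n : ℝ)⁻¹ * ∑ i, w h i * r h i =
      ∑ h ∈ Icc 1 H, ∑ x : S h, ∑ b : A, dpi h x b * rhat h x b := by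
  have hn' : (n : ℝ) ≠ 0 := Nat.cast_ne_zero.mpr hn.ne'
  have hninv : (n : ℝ)⁻¹ ≠ 0 := inv_ne_zero hn'
  have hnpos : (0:ℝ) < (n:ℝ)⁻¹ := inv_pos.mpr (by exact_mod_cast hn)
  -- positivity of counts
  have hc : ∀ h ∈ Icc 1 H, ∀ (x : S h) (b : A),
      (0:ℝ) < ∑ i, (if s h i = x ∧ a h i = b then (1:ℝ) else 0) := by
    intro h hh x b
    have h1 := hfull h hh x b
    rw [hdD] at h1
    nlinarith [h1, hnpos]
  -- grouped sum of w h over fiber (x,b)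
  have hwsum : ∀ h ∈ Icc 1 H, ∀ (x : S h) (b : A),
      ∑ i, w h i * (if s h i = x ∧ a h i = b then (1:ℝ) else 0)
        = (dpi h x b / dD h x b) * ∑ i, (if s h i = x ∧ a h i = b then (1:ℝ) else 0) := by
    intro h hh x b
    rw [Finset.mul_sum]
    refine Finset.sum_congr rfl fun i _ => ?_
    by_cases hcond : s h i = x ∧ a h i = b
    · rw [hwdef h hh i, hcond.1, hcond.2]
    · simp [hcond]
  -- LHS of constraint equals dpi
  have hLHS : ∀ h ∈ Icc 1 H, ∀ (x : S h) (b : A),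
      (n:ℝ)⁻¹ * ∑ i, w h i * (if s h i = x ∧ a h i = b then (1:ℝ) else 0) = dpi h x b := by
    intro h hh x b
    rw [hwsum h hh x b, hdD]
    have hcpos := (hc h hh x b).ne'
    generalize (∑ i, if s h i = x ∧ a h i = b then (1:ℝ) else 0) = c at hcpos ⊢
    field_simp
  -- RHS of constraint equals dpi
  have hRHS : ∀ h ∈ Icc 1 H, ∀ (x : S h) (b : A),
      (n:ℝ)⁻¹ * ∑ i, w (h - 1) i * (if s h i = x then (1:ℝ) else 0) * pol h x b
        = dpi h x b := by
    intro h hh x b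
    obtain ⟨h1, hHle⟩ := Finset.mem_Icc.mp hh
    match h, h1 with
    | 1, _ =>
      simp only [show (1:ℕ) - 1 = 0 from rfl, hw0, one_mul]
      rw [hdpi1, ← Finset.sum_mul]
      ring
    | (k+2), _ =>
      have hk : k + 1 ∈ Icc 1 H :=
        Finset.mem_Icc.mpr ⟨Nat.le_add_left 1 k, le_trans (Nat.le_succ _) hHle⟩
      have hsub : k + 2 - 1 = k + 1 := rfl
      rw [hsub]
      have hrw : ∀ i : Fin n, w (k+1) i * (if s (k+2) i = x then (1:ℝ) else 0) * pol (k+2) x b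
          = (fun p1 p2 => dpi (k+1) p1 p2 / dD (k+1) p1 p2) (s (k+1) i) (a (k+1) i)
            * (if s (k+2) i = x then (1:ℝ) else 0) * pol (k+2) x b := by
        intro i; rw [hwdef (k+1) hk i]
      rw [Finset.sum_congr rfl fun i _ => hrw i, ← Finset.sum_mul,
        fiber_sum (s (k+1)) (a (k+1)) (fun p1 p2 => dpi (k+1) p1 p2 / dD (k+1) p1 p2)
          (fun i => if s (k+2) i = x then (1:ℝ) else 0)]
      have inner : ∀ (p1 : S (k+1)) (p2 : A),
          (dpi (k+1) p1 p2 / dD (k+1) p1 p2) *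
            (∑ i, if s (k+1) i = p1 ∧ a (k+1) i = p2 then
              (if s (k+2) i = x then (1:ℝ) else 0) else 0)
          = (n:ℝ) * (dpi (k+1) p1 p2 * Phat (k+1) p1 p2 x) := by
        intro p1 p2
        have hnum : (∑ i, if s (k+1) i = p1 ∧ a (k+1) i = p2 then
              (if s (k+2) i = x then (1:ℝ) else 0) else 0)
            = ∑ i, if s (k+1) i = p1 ∧ a (k+1) i = p2 ∧ s (k+2) i = x then (1:ℝ) else 0 := by
          refine Finset.sum_congr rfl fun i _ => ?_
          by_cases h1 : s (k+1) i = p1 <;> by_cases h2 : a (k+1) i = p2 <;>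
            by_cases h3 : s (k+2) i = x <;> simp [h1, h2, h3]
        rw [hnum, hPhat, hdD]
        have hcpos := (hc (k+1) hk p1 p2).ne'
        generalize (∑ i, if s (k+1) i = p1 ∧ a (k+1) i = p2 then (1:ℝ) else 0) = c at hcpos ⊢
        generalize (∑ i, if s (k+1) i = p1 ∧ a (k+1) i = p2 ∧ s (k+2) i = x
          then (1:ℝ) else 0) = N
        field_simp
      rw [Finset.sum_congr rfl fun p1 _ => Finset.sum_congr rfl fun p2 _ => inner p1 p2]
      rw [hdpiStep k x b, Fintype.sum_prod_type]
      simp_rw [← Finset.mul_sum]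
      rw [← mul_assoc, ← mul_assoc, inv_mul_cancel₀ hn', one_mul, mul_comm]
  refine ⟨fun h hh => ⟨fun x b => (hLHS h hh x b).trans (hRHS h hh x b).symm, ?_⟩, ?_⟩
  · -- minimality
    intro w' hw'
    have hdiff : ∀ (x : S h) (b : A),
        ∑ i, (w' i - w h i) * (if s h i = x ∧ a h i = b then (1:ℝ) else 0) = 0 := by
      intro x b
      have e1 := (hw' x b).trans ((hLHS h hh x b).trans (hRHS h hh x b).symm).symm
      have e2 := mul_left_cancel₀ hninv e1
      simp only [sub_mul, Finset.sum_sub_distrib, e2, sub_self]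
    have cross : ∑ i, (w' i - w h i) * w h i = 0 := by
      have : ∑ i, (w' i - w h i) * w h i
          = ∑ i, (fun p1 p2 => dpi h p1 p2 / dD h p1 p2) (s h i) (a h i) * (w' i - w h i) := by
        refine Finset.sum_congr rfl fun i _ => ?_
        rw [hwdef h hh i]; ring
      rw [this, fiber_sum (s h) (a h) (fun p1 p2 => dpi h p1 p2 / dD h p1 p2)
        (fun i => w' i - w h i)]
      refine Finset.sum_eq_zero fun x _ => Finset.sum_eq_zero fun b _ => ?_
      have : (∑ i, if s h i = x ∧ a h i = b then (w' i - w h i) else 0) = 0 := by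
        have e : (∑ i, if s h i = x ∧ a h i = b then (w' i - w h i) else 0)
            = ∑ i, (w' i - w h i) * (if s h i = x ∧ a h i = b then (1:ℝ) else 0) :=
          Finset.sum_congr rfl fun i _ => by
            by_cases hcond : s h i = x ∧ a h i = b <;> simp [hcond]
        rw [e, hdiff x b]
      rw [this, mul_zero]
    have expand : ∑ i, w' i ^ 2
        = ∑ i, w h i ^ 2 + ∑ i, (w' i - w h i) ^ 2 := by
      have e : ∀ i : Fin n, w' i ^ 2
          = (w h i ^ 2 + (w' i - w h i) ^ 2) + 2 * ((w' i - w h i) * w h i) := by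
        intro i; ring
      rw [Finset.sum_congr rfl fun i _ => e i, Finset.sum_add_distrib,
        Finset.sum_add_distrib, ← Finset.mul_sum, cross, mul_zero, add_zero]
    constructor
    · rw [expand]
      exact le_add_of_nonneg_right (Finset.sum_nonneg fun i _ => sq_nonneg _)
    · intro heq
      have hz : ∑ i, (w' i - w h i) ^ 2 = 0 := by linarith [expand, heq]
      funext i
      have := (Finset.sum_eq_zero_iff_of_nonneg (fun j _ => sq_nonneg (w' j - w h j))).mp hz
        i (Finset.mem_univ i)
      have := pow_eq_zero_iff (n := 2) (by norm_num) |>.mp this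
      linarith [this]
  · -- value identity
    refine Finset.sum_congr rfl fun h hh => ?_
    have hrw : ∀ i : Fin n, w h i * r h i
        = (fun p1 p2 => dpi h p1 p2 / dD h p1 p2) (s h i) (a h i) * r h i := by
      intro i; rw [hwdef h hh i]
    rw [Finset.sum_congr rfl fun i _ => hrw i,
      fiber_sum (s h) (a h) (fun p1 p2 => dpi h p1 p2 / dD h p1 p2) (r h), Finset.mul_sum]
    refine Finset.sum_congr rfl fun x _ => ?_
    rw [Finset.mul_sum]
    refine Finset.sum_congr rfl fun b _ => ?_
    rw [hrhat, hdD]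
    have hcpos := (hc h hh x b).ne'
    generalize (∑ i, if s h i = x ∧ a h i = b then (1:ℝ) else 0) = c at hcpos ⊢
    generalize (∑ i, if s h i = x ∧ a h i = b then r h i else 0) = R
    field_simp
end

section
/- Let w(x) := φ_X(x)ᵀ Σ_X⁻¹ ψ. Then: (i) ⟨w, φ_Xᵀθ⟩_μ = ψᵀθ for every θ ∈ ℝ^d, and w is the unique element of H_X := {x ↦ φ_X(x)ᵀθ : θ ∈ ℝ^d} with this representing property; (ii) ‖w‖_μ² = ψᵀ Σ_X⁻¹ ψ; (iii) the propagated functional Λ'(g) := Σ_{x∈X} μ(x)·w(x)·(Pg)(x) satisfies Λ'(φ_Yᵀθ) = (Bψ)ᵀθ for every θ ∈ ℝ^d, where B := (Σ^{cr})ᵀ Σ_X⁻¹; consequently the representer of Λ' in H_Y := {y ↦ φ_Y(y)ᵀθ : θ ∈ ℝ^d} with respect to ⟨·,·⟩_ν is y ↦ φ_Y(y)ᵀ Σ_Y⁻¹ (Bψ). -/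
/-!
Every identity is an instance of `∑ₓ c(x) (f(x)ᵀa) (g(x)ᵀb) = aᵀ (∑ₓ c(x) f(x) g(x)ᵀ) b`.
For the symmetric Gram matrix `Σ_X` this turns `⟨φ_Xᵀθ', φ_Xᵀθ⟩_μ` into `(Σ_X θ')ᵀθ`, so
`θ' = Σ_X⁻¹ψ` represents `θ ↦ ψᵀθ`, and it is the only such `θ'` because `Σ_X` is invertible.
Since `P(φ_Yᵀθ) = (Pφ_Y)ᵀθ`, the same identity with the cross-covariance gives
`Λ'(φ_Yᵀθ) = (Σ_X⁻¹ψ)ᵀ Σ^{cr} θ = (Bψ)ᵀθ`.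
-/

open Matrix Finset

section Gram

variable {ι κ n R : Type*} [Fintype ι] [Fintype κ] [Fintype n] [CommRing R]

theorem sum_mul_dotProduct_mul_dotProduct (c : ι → R) (f g : ι → n → R) (a b : n → R) :
    ∑ i, c i * (f i ⬝ᵥ a) * (g i ⬝ᵥ b) =
      a ⬝ᵥ (∑ i, c i • vecMulVec (f i) (g i)) *ᵥ b := by
  simp only [sum_mulVec, dotProduct_sum, smul_mulVec, vecMulVec_mulVec, dotProduct_smul,
    op_smul_eq_smul, smul_eq_mul]
  refine sum_congr rfl fun i _ => ?_
  rw [dotProduct_comm a]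
  ring

theorem sum_mul_dotProduct (p : κ → R) (g : κ → n → R) (θ : n → R) :
    ∑ j, p j * (g j ⬝ᵥ θ) = (fun k => ∑ j, p j * g j k) ⬝ᵥ θ :=
  (dotProduct_mulVec p (of g) θ).trans rfl

theorem sum_mul_dotProduct_mul_dotProduct_eq_mulVec_dotProduct (c : ι → R) (f : ι → n → R)
    (a b : n → R) :
    ∑ i, c i * (f i ⬝ᵥ a) * (f i ⬝ᵥ b) = (∑ i, c i • vecMulVec (f i) (f i)) *ᵥ a ⬝ᵥ b := by
  rw [sum_mul_dotProduct_mul_dotProduct, dotProduct_mulVec, ← mulVec_transpose]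
  simp only [transpose_sum, transpose_smul, transpose_vecMulVec]

variable [DecidableEq n]

theorem sum_mul_dotProduct_inv_mulVec_mul_dotProduct (c : ι → R) (f : ι → n → R)
    (hS : IsUnit (∑ i, c i • vecMulVec (f i) (f i)).det) (ψ θ : n → R) :
    ∑ i, c i * (f i ⬝ᵥ (∑ i, c i • vecMulVec (f i) (f i))⁻¹ *ᵥ ψ) * (f i ⬝ᵥ θ) = ψ ⬝ᵥ θ := by
  rw [sum_mul_dotProduct_mul_dotProduct_eq_mulVec_dotProduct, mulVec_mulVec,
    mul_nonsing_inv _ hS, one_mulVec]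

theorem eq_inv_mulVec_of_forall_sum_mul_dotProduct_mul_dotProduct (c : ι → R)
    (f : ι → n → R) (hS : IsUnit (∑ i, c i • vecMulVec (f i) (f i)).det) {ψ θ' : n → R}
    (h : ∀ θ, ∑ i, c i * (f i ⬝ᵥ θ') * (f i ⬝ᵥ θ) = ψ ⬝ᵥ θ) :
    θ' = (∑ i, c i • vecMulVec (f i) (f i))⁻¹ *ᵥ ψ := by
  have hSθ' : (∑ i, c i • vecMulVec (f i) (f i)) *ᵥ θ' = ψ :=
    dotProduct_eq _ _ fun θ => by
      rw [← sum_mul_dotProduct_mul_dotProduct_eq_mulVec_dotProduct, h]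
  rw [← hSθ', mulVec_mulVec, nonsing_inv_mul _ hS, one_mulVec]

end Gram

theorem stmt_11_general {X Y : Type*} [Fintype X] [Fintype Y] (d : ℕ)
    (μ : X → ℝ) (ν : Y → ℝ)
    (φX : X → Fin d → ℝ) (φY : Y → Fin d → ℝ)
    (SX SY : Matrix (Fin d) (Fin d) ℝ)
    (hSX : SX = ∑ x, μ x • vecMulVec (φX x) (φX x))
    (hSY : SY = ∑ y, ν y • vecMulVec (φY y) (φY y))
    (hXinv : IsUnit SX.det) (hYinv : IsUnit SY.det)
    (P : X → Y → ℝ)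
    (Scr : Matrix (Fin d) (Fin d) ℝ)
    (hScr : Scr = ∑ x, μ x • vecMulVec (φX x) (fun j => ∑ y, P x y * φY y j))
    (ψ : Fin d → ℝ)
    (w : X → ℝ) (hw : ∀ x, w x = φX x ⬝ᵥ SX⁻¹ *ᵥ ψ)
    (B : Matrix (Fin d) (Fin d) ℝ) (hB : B = Scrᵀ * SX⁻¹)
    (Lam : (Y → ℝ) → ℝ)
    (hLam : ∀ gf, Lam gf = ∑ x, μ x * w x * ∑ y, P x y * gf y) :
    ((∀ θ : Fin d → ℝ, ∑ x, μ x * w x * (φX x ⬝ᵥ θ) = ψ ⬝ᵥ θ) ∧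
      (∃ θ', w = fun x => φX x ⬝ᵥ θ') ∧
      ∀ w' : X → ℝ, (∃ θ', w' = fun x => φX x ⬝ᵥ θ') →
        (∀ θ : Fin d → ℝ, ∑ x, μ x * w' x * (φX x ⬝ᵥ θ) = ψ ⬝ᵥ θ) → w' = w) ∧
    (∑ x, μ x * w x ^ 2 = ψ ⬝ᵥ SX⁻¹ *ᵥ ψ) ∧
    ((∀ θ : Fin d → ℝ, Lam (fun y => φY y ⬝ᵥ θ) = (B *ᵥ ψ) ⬝ᵥ θ) ∧
      ∀ θ : Fin d → ℝ,
        ∑ y, ν y * (φY y ⬝ᵥ SY⁻¹ *ᵥ (B *ᵥ ψ)) * (φY y ⬝ᵥ θ) =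
          Lam (fun y => φY y ⬝ᵥ θ)) := by
  obtain rfl : w = fun x => φX x ⬝ᵥ SX⁻¹ *ᵥ ψ := funext hw
  subst hSX hSY
  have represents := sum_mul_dotProduct_inv_mulVec_mul_dotProduct μ φX hXinv ψ
  have propagates (θ : Fin d → ℝ) : Lam (fun y => φY y ⬝ᵥ θ) = (B *ᵥ ψ) ⬝ᵥ θ := by
    simp only [hLam, sum_mul_dotProduct (P _)]
    rw [sum_mul_dotProduct_mul_dotProduct, ← hScr, dotProduct_mulVec, ← mulVec_transpose,
      mulVec_mulVec, hB]
  refine ⟨⟨represents, ⟨_, rfl⟩, ?_⟩, ?_, propagates, fun θ => ?_⟩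
  · rintro _ ⟨θ', rfl⟩ h
    rw [eq_inv_mulVec_of_forall_sum_mul_dotProduct_mul_dotProduct μ φX hXinv h]
  · simpa only [sq, mul_assoc] using represents _
  · rw [propagates, sum_mul_dotProduct_inv_mulVec_mul_dotProduct ν φY hYinv]

/-- linear forms of the representers: with `w(x) := φ_X(x)ᵀ Σ_X⁻¹ ψ`:
(i) `⟨w, φ_Xᵀθ⟩_μ = ψᵀθ` for all `θ`, and `w` is the unique element of
`H_X = {x ↦ φ_X(x)ᵀθ}` with this property; (ii) `‖w‖_μ² = ψᵀ Σ_X⁻¹ ψ`;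
(iii) the propagated functional `Λ'(g) := Σₓ μ(x) w(x) (Pg)(x)` satisfies
`Λ'(φ_Yᵀθ) = (Bψ)ᵀθ` with `B = (Σ^{cr})ᵀ Σ_X⁻¹`, so its representer in `H_Y`
is `y ↦ φ_Y(y)ᵀ Σ_Y⁻¹ (Bψ)`. -/
theorem stmt_11 {X Y : Type*} [Fintype X] [Fintype Y] (d : ℕ)
    (μ : X → ℝ) (ν : Y → ℝ)
    (hμ0 : ∀ x, 0 ≤ μ x) (hμ1 : ∑ x, μ x = 1)
    (hν0 : ∀ y, 0 ≤ ν y) (hν1 : ∑ y, ν y = 1)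
    (φX : X → Fin d → ℝ) (φY : Y → Fin d → ℝ)
    (SX SY : Matrix (Fin d) (Fin d) ℝ)
    (hSX : SX = ∑ x, μ x • vecMulVec (φX x) (φX x))
    (hSY : SY = ∑ y, ν y • vecMulVec (φY y) (φY y))
    (hXinv : IsUnit SX.det) (hYinv : IsUnit SY.det)
    (P : X → Y → ℝ) (hP0 : ∀ x y, 0 ≤ P x y) (hP1 : ∀ x, ∑ y, P x y = 1)
    (Scr : Matrix (Fin d) (Fin d) ℝ)
    (hScr : Scr = ∑ x, μ x • vecMulVec (φX x) (fun j => ∑ y, P x y * φY y j))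
    (ψ : Fin d → ℝ)
    (w : X → ℝ) (hw : ∀ x, w x = φX x ⬝ᵥ SX⁻¹ *ᵥ ψ)
    (B : Matrix (Fin d) (Fin d) ℝ) (hB : B = Scrᵀ * SX⁻¹)
    (Lam : (Y → ℝ) → ℝ)
    (hLam : ∀ gf, Lam gf = ∑ x, μ x * w x * ∑ y, P x y * gf y) :
    ((∀ θ : Fin d → ℝ, ∑ x, μ x * w x * (φX x ⬝ᵥ θ) = ψ ⬝ᵥ θ) ∧
      (∃ θ', w = fun x => φX x ⬝ᵥ θ') ∧
      ∀ w' : X → ℝ, (∃ θ', w' = fun x => φX x ⬝ᵥ θ') →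
        (∀ θ : Fin d → ℝ, ∑ x, μ x * w' x * (φX x ⬝ᵥ θ) = ψ ⬝ᵥ θ) → w' = w) ∧
    (∑ x, μ x * w x ^ 2 = ψ ⬝ᵥ SX⁻¹ *ᵥ ψ) ∧
    ((∀ θ : Fin d → ℝ, Lam (fun y => φY y ⬝ᵥ θ) = (B *ᵥ ψ) ⬝ᵥ θ) ∧
      ∀ θ : Fin d → ℝ,
        ∑ y, ν y * (φY y ⬝ᵥ SY⁻¹ *ᵥ (B *ᵥ ψ)) * (φY y ⬝ᵥ θ) =
          Lam (fun y => φY y ⬝ᵥ θ)) :=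
  stmt_11_general d μ ν φX φY SX SY hSX hSY hXinv hYinv P Scr hScr ψ w hw B hB Lam hLam
end

section
/- In the linear layered setting: (i) for each t, the projected backup operator satisfies K_t(φ_{t+1}ᵀθ) = φ_tᵀ(B_tᵀθ) for every θ ∈ ℝ^d, where B_t := (Σ_t^{cr})ᵀ Σ_t⁻¹; (ii) for every t < h and θ ∈ ℝ^d, (K_t K_{t+1} ⋯ K_{h−1}(φ_hᵀθ))(x) = φ_t(x)ᵀ (B_{h−1} ⋯ B_{t+1} B_t)ᵀ θ for all x ∈ X_t; and (iii) ρ_{t:h} ≤ max_{x∈X_t} ‖Σ_h^{−1/2} B_{h−1} ⋯ B_{t+1} B_t φ_t(x)‖₂, where Σ_h^{1/2} is the positive-definite square root of Σ_h and ρ_{t:h} := sup{ ‖K_t K_{t+1} ⋯ K_{h−1} f‖_∞ : f ∈ H_h, ‖f‖_∞ ≤ 1 }. -/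
open Matrix Finset

/-- Iterated projected backup: `KiterQMMR K t k = K_t ∘ K_{t+1} ∘ ⋯ ∘ K_{t+k−1}`. -/
def KiterQMMR {X : ℕ → Type} (K : ∀ t, (X (t + 1) → ℝ) → (X t → ℝ)) :
    ∀ (t k : ℕ), (X (t + k) → ℝ) → (X t → ℝ)
  | _, 0 => id
  | t, (k + 1) => fun f => KiterQMMR K t k (K (t + k) f)

/-- Iterated transition matrices: `BiterQMMR d B t k = B_{t+k−1} ⋯ B_{t+1} B_t`. -/
def BiterQMMR (d : ℕ) (B : ℕ → Matrix (Fin d) (Fin d) ℝ) : ℕ → ℕ → Matrix (Fin d) (Fin d) ℝ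
  | _, 0 => 1
  | t, (k + 1) => BiterQMMR d B (t + 1) k * B t

/-- The positive semidefinite square root of a positive semidefinite matrix, as
`Matrix.PosSemidef.sqrt` was defined in Mathlib (Dec 2024); it has since been removed. -/
noncomputable def posSemidefSqrtQMMR {𝕜 : Type*} [RCLike 𝕜] {n : Type*} [Fintype n]
    [DecidableEq n] {A : Matrix n n 𝕜} (hA : A.IsHermitian) : Matrix n n 𝕜 :=
  hA.eigenvectorUnitary.1 * diagonal ((↑) ∘ Real.sqrt ∘ hA.eigenvalues) *
  (star hA.eigenvectorUnitary : Matrix n n 𝕜)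

lemma posSemidefSqrtQMMR_aux (d : ℕ) (A : Matrix (Fin d) (Fin d) ℝ) (hP : A.PosSemidef) :
    posSemidefSqrtQMMR hP.1 * posSemidefSqrtQMMR hP.1 = A ∧
      (posSemidefSqrtQMMR hP.1)ᵀ = posSemidefSqrtQMMR hP.1 := by
  have hU : (star hP.1.eigenvectorUnitary : Matrix (Fin d) (Fin d) ℝ) * hP.1.eigenvectorUnitary.1 = 1 :=
    Unitary.star_mul_self_of_mem hP.1.eigenvectorUnitary.2
  constructor
  · conv_rhs => rw [hP.1.spectral_theorem]
    simp only [posSemidefSqrtQMMR, Unitary.conjStarAlgAut_apply]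
    have hD : diagonal ((↑) ∘ Real.sqrt ∘ hP.1.eigenvalues : Fin d → ℝ) * diagonal ((↑) ∘ Real.sqrt ∘ hP.1.eigenvalues)
        = diagonal (RCLike.ofReal ∘ hP.1.eigenvalues) := by
      rw [diagonal_mul_diagonal]; congr 1; funext i
      simp [Real.mul_self_sqrt (hP.eigenvalues_nonneg i)]
    rw [← hD]
    simp only [Matrix.mul_assoc]
    rw [← Matrix.mul_assoc (star _ : Matrix _ _ ℝ) _ _, hU, Matrix.one_mul]; rfl
  · rw [← Matrix.conjTranspose_eq_transpose_of_trivial]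
    simp only [posSemidefSqrtQMMR, conjTranspose_mul, diagonal_conjTranspose, Matrix.mul_assoc]
    simp [Matrix.star_eq_conjTranspose]

lemma BiterQMMR_succ_left (d : ℕ) (B : ℕ → Matrix (Fin d) (Fin d) ℝ) :
    ∀ k t, BiterQMMR d B t (k + 1) = B (t + k) * BiterQMMR d B t k := by
  intro k
  induction k with
  | zero => intro t; simp [BiterQMMR]
  | succ k ih =>
    intro t
    show BiterQMMR d B (t + 1) (k + 1) * B t = _
    rw [ih (t + 1)]
    show B (t + 1 + k) * BiterQMMR d B (t + 1) k * B t
        = B (t + (k + 1)) * (BiterQMMR d B (t + 1) k * B t)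
    rw [mul_assoc, show t + 1 + k = t + (k + 1) from by omega]

lemma dotT_aux {d : ℕ} (A : Matrix (Fin d) (Fin d) ℝ) (u v : Fin d → ℝ) :
    (A *ᵥ u) ⬝ᵥ v = u ⬝ᵥ (Aᵀ *ᵥ v) := by
  rw [Matrix.dotProduct_mulVec, Matrix.vecMul_transpose]

lemma cs_aux {d : ℕ} (u v : Fin d → ℝ) :
    |u ⬝ᵥ v| ≤ Real.sqrt (∑ j, u j ^ 2) * Real.sqrt (∑ j, v j ^ 2) := by
  have h2 := Finset.sum_mul_sq_le_sq_mul_sq Finset.univ u v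
  have : |u ⬝ᵥ v| = Real.sqrt ((∑ j, u j * v j) ^ 2) := by
    rw [Real.sqrt_sq_eq_abs]; rfl
  rw [this, ← Real.sqrt_mul (by positivity)]
  exact Real.sqrt_le_sqrt h2

/-- projected backups in the linear layered setting:
(i) `K_t(φ_{t+1}ᵀθ) = φ_tᵀ(B_tᵀθ)` with `B_t = (Σ_t^{cr})ᵀ Σ_t⁻¹`;
(ii) the multi-step projected backup of `φ_hᵀθ` (with `h = t + k`) is
`x ↦ φ_t(x)ᵀ (B_{h−1}⋯B_t)ᵀ θ`;
(iii) `ρ_{t:h} ≤ max_x ‖Σ_h^{−1/2} B_{h−1}⋯B_t φ_t(x)‖₂`, where `Σ_h^{1/2}` is the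
positive semidefinite square root of `Σ_h`. -/
theorem stmt_12 (d : ℕ) (X : ℕ → Type) [∀ t, Fintype (X t)] [∀ t, Nonempty (X t)]
    (μ : ∀ t, X t → ℝ)
    (hμ0 : ∀ t x, 0 ≤ μ t x) (hμ1 : ∀ t, ∑ x, μ t x = 1)
    (P : ∀ t, X t → X (t + 1) → ℝ)
    (hP0 : ∀ t x y, 0 ≤ P t x y) (hP1 : ∀ t x, ∑ y, P t x y = 1)
    (φ : ∀ t, X t → Fin d → ℝ)
    (Sig : ℕ → Matrix (Fin d) (Fin d) ℝ)
    (hSig : ∀ t, Sig t = ∑ x, μ t x • vecMulVec (φ t x) (φ t x))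
    (hPD : ∀ t, (Sig t).PosDef)
    (Scr : ℕ → Matrix (Fin d) (Fin d) ℝ)
    (hScr : ∀ t, Scr t = ∑ x, μ t x • vecMulVec (φ t x) (fun j => ∑ y, P t x y * φ (t + 1) y j))
    (B : ℕ → Matrix (Fin d) (Fin d) ℝ)
    (hB : ∀ t, B t = (Scr t)ᵀ * (Sig t)⁻¹)
    (K : ∀ t, (X (t + 1) → ℝ) → (X t → ℝ))
    (hKmem : ∀ t f, ∃ θ : Fin d → ℝ, K t f = fun x => φ t x ⬝ᵥ θ)
    (hKproj : ∀ t f, ∀ θ : Fin d → ℝ,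
      ∑ x, μ t x * ((∑ y, P t x y * f y) - K t f x) * (φ t x ⬝ᵥ θ) = 0) :
    (∀ t (θ : Fin d → ℝ),
      K t (fun y => φ (t + 1) y ⬝ᵥ θ) = fun x => φ t x ⬝ᵥ (B t)ᵀ *ᵥ θ) ∧
    (∀ t k (θ : Fin d → ℝ), 1 ≤ k →
      KiterQMMR K t k (fun y => φ (t + k) y ⬝ᵥ θ) =
        fun x => φ t x ⬝ᵥ (BiterQMMR d B t k)ᵀ *ᵥ θ) ∧
    (∀ t k, 1 ≤ k →
      sSup {ρ : ℝ | ∃ θ : Fin d → ℝ, (⨆ y, |φ (t + k) y ⬝ᵥ θ|) ≤ 1 ∧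
          ρ = ⨆ x, |KiterQMMR K t k (fun y => φ (t + k) y ⬝ᵥ θ) x|} ≤
        ⨆ x : X t, Real.sqrt (∑ j,
          (((posSemidefSqrtQMMR (hPD (t + k)).posSemidef.1)⁻¹ * BiterQMMR d B t k) *ᵥ φ t x) j ^ 2)) := by
  have hSigT : ∀ t, (Sig t)ᵀ = Sig t := fun t => by
    have := (hPD t).isHermitian
    rwa [Matrix.IsHermitian, Matrix.conjTranspose_eq_transpose_of_trivial] at this
  have hSigv : ∀ t (v : Fin d → ℝ) (i : Fin d),
      (Sig t *ᵥ v) i = ∑ x, μ t x * (φ t x ⬝ᵥ v) * φ t x i := by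
    intro t v i
    rw [hSig]
    simp only [Matrix.mulVec, dotProduct, Matrix.sum_apply, Matrix.smul_apply,
      Matrix.vecMulVec_apply, smul_eq_mul, Finset.sum_mul, Finset.mul_sum]
    rw [Finset.sum_comm]
    exact Finset.sum_congr rfl fun x _ => Finset.sum_congr rfl fun j _ => by ring
  have hScrv : ∀ t (v : Fin d → ℝ) (i : Fin d),
      (Scr t *ᵥ v) i = ∑ x, μ t x * (∑ y, P t x y * (φ (t + 1) y ⬝ᵥ v)) * φ t x i := by
    intro t v i
    rw [hScr]
    simp only [Matrix.mulVec, dotProduct, Matrix.sum_apply, Matrix.smul_apply,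
      Matrix.vecMulVec_apply, smul_eq_mul, Finset.sum_mul, Finset.mul_sum]
    rw [Finset.sum_comm]
    refine Finset.sum_congr rfl fun x _ => ?_
    rw [Finset.sum_comm]
    exact Finset.sum_congr rfl fun l _ => Finset.sum_congr rfl fun m _ => by ring
  have hi : ∀ t (θ : Fin d → ℝ),
      K t (fun y => φ (t + 1) y ⬝ᵥ θ) = fun x => φ t x ⬝ᵥ (B t)ᵀ *ᵥ θ := by
    intro t θ
    obtain ⟨θ', hθ'⟩ := hKmem t (fun y => φ (t + 1) y ⬝ᵥ θ)
    have hv : Sig t *ᵥ θ' = Scr t *ᵥ θ := by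
      funext i
      have h := hKproj t (fun y => φ (t + 1) y ⬝ᵥ θ) (Pi.single i 1)
      rw [hθ'] at h
      simp only [dotProduct_single, mul_one] at h
      rw [hSigv, hScrv]
      have expand : ∀ x ∈ Finset.univ,
          μ t x * ((∑ y, P t x y * (φ (t + 1) y ⬝ᵥ θ)) - φ t x ⬝ᵥ θ') * φ t x i
          = μ t x * (∑ y, P t x y * (φ (t + 1) y ⬝ᵥ θ)) * φ t x i
            - μ t x * (φ t x ⬝ᵥ θ') * φ t x i := fun x _ => by ring
      rw [Finset.sum_congr rfl expand, Finset.sum_sub_distrib] at h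
      linarith
    have hdet : IsUnit (Sig t).det := isUnit_iff_ne_zero.mpr (hPD t).det_pos.ne'
    have hθ'' : θ' = (B t)ᵀ *ᵥ θ := by
      have h1 : (Sig t)⁻¹ *ᵥ (Sig t *ᵥ θ') = (Sig t)⁻¹ *ᵥ (Scr t *ᵥ θ) := by rw [hv]
      rw [Matrix.mulVec_mulVec, Matrix.mulVec_mulVec, Matrix.nonsing_inv_mul _ hdet,
        Matrix.one_mulVec] at h1
      rw [h1, hB, Matrix.transpose_mul, Matrix.transpose_nonsing_inv, Matrix.transpose_transpose,
        hSigT t]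
    rw [hθ', hθ'']
  have hii0 : ∀ k t (θ : Fin d → ℝ),
      KiterQMMR K t k (fun y => φ (t + k) y ⬝ᵥ θ) =
        fun x => φ t x ⬝ᵥ (BiterQMMR d B t k)ᵀ *ᵥ θ := by
    intro k
    induction k with
    | zero =>
      intro t θ
      funext x
      simp [KiterQMMR, BiterQMMR, Matrix.transpose_one, Matrix.one_mulVec]
    | succ k ih =>
      intro t θ
      show KiterQMMR K t k (K (t + k) (fun y => φ (t + k + 1) y ⬝ᵥ θ)) = _
      rw [hi (t + k) θ, ih t ((B (t + k))ᵀ *ᵥ θ)]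
      funext x
      rw [Matrix.mulVec_mulVec, ← Matrix.transpose_mul, ← BiterQMMR_succ_left]
  refine ⟨hi, fun t k θ _ => hii0 k t θ, ?_⟩
  intro t k _
  set S := (posSemidefSqrtQMMR (hPD (t + k)).posSemidef.1) with hSdef
  have hSsq : S * S = Sig (t + k) := (posSemidefSqrtQMMR_aux d _ (hPD (t + k)).posSemidef).1
  have hST : Sᵀ = S := by
    exact (posSemidefSqrtQMMR_aux d _ (hPD (t + k)).posSemidef).2
  have hSdet : IsUnit S.det := by
    have hm : S.det * S.det = (Sig (t + k)).det := by rw [← Matrix.det_mul, hSsq]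
    have hpos := (hPD (t + k)).det_pos
    refine isUnit_iff_ne_zero.mpr fun h0 => ?_
    rw [h0, mul_zero] at hm
    linarith [hm ▸ hpos]
  have hSinv : S * S⁻¹ = 1 := Matrix.mul_nonsing_inv _ hSdet
  set M := BiterQMMR d B t k with hMdef
  set N : X t → ℝ := fun x => Real.sqrt (∑ j, ((S⁻¹ * M) *ᵥ φ t x) j ^ 2) with hNdef
  have hN0 : ∀ x, 0 ≤ N x := fun x => Real.sqrt_nonneg _
  have hNsup0 : 0 ≤ ⨆ x : X t, N x :=
    le_trans (hN0 (Classical.arbitrary (X t))) (le_ciSup (Finite.bddAbove_range N) _)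
  refine Real.sSup_le ?_ hNsup0
  rintro ρ ⟨θ, hθ1, rfl⟩
  simp only [hii0 k t θ]
  refine ciSup_le fun x => ?_
  -- bound on ‖S θ‖
  have hterm : ∀ y, (φ (t + k) y ⬝ᵥ θ) ^ 2 ≤ 1 := fun y => by
    have h1 : |φ (t + k) y ⬝ᵥ θ| ≤ 1 :=
      le_trans (le_ciSup (f := fun y => |φ (t + k) y ⬝ᵥ θ|) (Finite.bddAbove_range _) y) hθ1
    calc (φ (t + k) y ⬝ᵥ θ) ^ 2 = |φ (t + k) y ⬝ᵥ θ| ^ 2 := (sq_abs _).symm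
      _ ≤ 1 ^ 2 := pow_le_pow_left₀ (abs_nonneg _) h1 2
      _ = 1 := one_pow 2
  have e1 : ∑ j, (S *ᵥ θ) j ^ 2 = θ ⬝ᵥ (Sig (t + k) *ᵥ θ) := by
    have h0 : ∑ j, (S *ᵥ θ) j ^ 2 = (S *ᵥ θ) ⬝ᵥ (S *ᵥ θ) := by
      simp [dotProduct, sq]
    rw [h0, dotT_aux, hST, Matrix.mulVec_mulVec, hSsq]
  have e2 : θ ⬝ᵥ (Sig (t + k) *ᵥ θ) = ∑ y, μ (t + k) y * (φ (t + k) y ⬝ᵥ θ) ^ 2 := by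
    show ∑ i, θ i * (Sig (t + k) *ᵥ θ) i = _
    simp_rw [hSigv, Finset.mul_sum]
    rw [Finset.sum_comm]
    refine Finset.sum_congr rfl fun y _ => ?_
    have h1 : ∑ i, θ i * (μ (t + k) y * (φ (t + k) y ⬝ᵥ θ) * φ (t + k) y i)
        = (μ (t + k) y * (φ (t + k) y ⬝ᵥ θ)) * (θ ⬝ᵥ φ (t + k) y) := by
      have hdp : θ ⬝ᵥ φ (t + k) y = ∑ i, θ i * φ (t + k) y i := rfl
      rw [hdp, Finset.mul_sum]
      exact Finset.sum_congr rfl fun i _ => by ring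
    rw [h1, dotProduct_comm]
    ring
  have hv1 : ∑ j, (S *ᵥ θ) j ^ 2 ≤ 1 := by
    rw [e1, e2]
    calc ∑ y, μ (t + k) y * (φ (t + k) y ⬝ᵥ θ) ^ 2
        ≤ ∑ y, μ (t + k) y * 1 :=
          Finset.sum_le_sum fun y _ => mul_le_mul_of_nonneg_left (hterm y) (hμ0 _ y)
      _ = 1 := by simp [hμ1]
  have hvsqrt : Real.sqrt (∑ j, (S *ᵥ θ) j ^ 2) ≤ 1 := by
    rw [show (1 : ℝ) = Real.sqrt 1 from (Real.sqrt_one).symm]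
    exact Real.sqrt_le_sqrt hv1
  -- rewrite the dot product
  have claim0 : φ t x ⬝ᵥ (Mᵀ *ᵥ θ) = ((S⁻¹ * M) *ᵥ φ t x) ⬝ᵥ (S *ᵥ θ) := by
    have hcl : ((S⁻¹ * M) *ᵥ φ t x) ⬝ᵥ (S *ᵥ θ) = φ t x ⬝ᵥ (Mᵀ *ᵥ θ) := by
      rw [dotT_aux, Matrix.mulVec_mulVec, Matrix.transpose_mul,
        Matrix.transpose_nonsing_inv, hST, mul_assoc, Matrix.nonsing_inv_mul _ hSdet, mul_one]
    exact hcl.symm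
  calc |φ t x ⬝ᵥ Mᵀ *ᵥ θ|
      = |((S⁻¹ * M) *ᵥ φ t x) ⬝ᵥ (S *ᵥ θ)| := by rw [claim0]
    _ ≤ N x * Real.sqrt (∑ j, (S *ᵥ θ) j ^ 2) := cs_aux _ _
    _ ≤ N x * 1 := mul_le_mul_of_nonneg_left hvsqrt (Real.sqrt_nonneg _)
    _ = N x := mul_one _
    _ ≤ ⨆ x : X t, N x := le_ciSup (Finite.bddAbove_range _) x
end

section
/- Assume X_0 = {x₀} is a singleton with μ_0 the point mass at x₀, w_0 ≡ 1, and for each t ∈ {1,…,h} a function w_t ∈ H_t satisfies the exact population matching equations ⟨w_t, f⟩_{μ_t} = Σ_{x∈X_{t−1}} μ_{t−1}(x)·w_{t−1}(x)·(P_{t−1}f)(x) for all f ∈ H_t. Then for every f ∈ H_h, |⟨w_h, f⟩_{μ_h}| ≤ ‖K_1 K_2 ⋯ K_{h−1} f‖_∞; in particular sup{ |⟨w_h,f⟩_{μ_h}| : f ∈ H_h, ‖f‖_∞ ≤ 1 } ≤ ρ_{1:h}, where ρ_{1:h} := sup{ ‖K_1 K_2 ⋯ K_{h−1} f‖_∞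 : f ∈ H_h, ‖f‖_∞ ≤ 1 }. -/
open Finset

/-!
Testing `f ∈ H_h` against the matching equation at level `h` and replacing `P_{h-1} f` by its
projection `K_{h-1} f ∈ H_{h-1}` (legitimate because `w_{h-1} ∈ H_{h-1}`) gives
`⟨w_h, f⟩ = ⟨w_{h-1}, K_{h-1} f⟩`. Iterating down to level 1 and using the matching equation at
level 0, where `μ_0` is a point mass and `w_0 ≡ 1`, gives `⟨w_h, f⟩ = (P_0 (K_1 ⋯ K_{h-1} f))(x₀)`,
an average of `K_1 ⋯ K_{h-1} f`, hence bounded by its sup norm. For the supremum bound, the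
projections are linear because `‖·‖_μ` is a norm on each `H_t`, so `K_1 ⋯ K_{h-1}` is a linear map
between finite-dimensional spaces and the right-hand supremum is finite.
-/

section Projection

variable {E F : Type*} [AddCommGroup E] [Module ℝ E] [AddCommGroup F] [Module ℝ F]
  {B : LinearMap.BilinForm ℝ E} {H : Submodule ℝ E}

theorem eq_of_residual_orthogonal (hB : ∀ g ∈ H, B g g = 0 → g = 0) {v g₁ g₂ : E}
    (hg₁ : g₁ ∈ H) (hg₂ : g₂ ∈ H) (h₁ : ∀ q ∈ H, B (v - g₁) q = 0)
    (h₂ : ∀ q ∈ H, B (v - g₂) q = 0) : g₁ = g₂ := by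
  have hd : g₂ - g₁ ∈ H := H.sub_mem hg₂ hg₁
  have horth : B (g₂ - g₁) (g₂ - g₁) = 0 := calc
    _ = B (v - g₁) (g₂ - g₁) - B (v - g₂) (g₂ - g₁) := by
      rw [← LinearMap.sub_apply, ← map_sub, sub_sub_sub_cancel_left]
    _ = 0 := by rw [h₁ _ hd, h₂ _ hd, sub_zero]
  exact (sub_eq_zero.mp (hB _ hd horth)).symm

theorem isLinearMap_of_residual_orthogonal (hB : ∀ g ∈ H, B g g = 0 → g = 0)
    (A : F →ₗ[ℝ] E) {K : F → E} (hKmem : ∀ f, K f ∈ H)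
    (hKorth : ∀ f, ∀ q ∈ H, B (A f - K f) q = 0) : IsLinearMap ℝ K where
  map_add f g := by
    refine eq_of_residual_orthogonal hB (hKmem _) (H.add_mem (hKmem f) (hKmem g))
      (hKorth _) fun q hq => ?_
    have : A (f + g) - (K f + K g) = (A f - K f) + (A g - K g) := by rw [map_add]; abel
    rw [this, map_add, LinearMap.add_apply, hKorth f q hq, hKorth g q hq, add_zero]
  map_smul c f := by
    refine eq_of_residual_orthogonal hB (hKmem _) (H.smul_mem c (hKmem f))
      (hKorth _) fun q hq => ?_
    rw [map_smul, ← smul_sub, map_smul, LinearMap.smul_apply, hKorth f q hq, smul_zero]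

end Projection

def weightedForm {ι : Type*} [Fintype ι] (μ : ι → ℝ) : LinearMap.BilinForm ℝ (ι → ℝ) :=
  LinearMap.mk₂ ℝ (fun u v => ∑ x, μ x * u x * v x)
    (fun _ _ _ => by simp only [Pi.add_apply, ← sum_add_distrib, add_mul, mul_add])
    (fun _ _ _ => by simp only [Pi.smul_apply, smul_eq_mul, mul_sum, mul_left_comm, mul_assoc])
    (fun _ _ _ => by simp only [Pi.add_apply, ← sum_add_distrib, mul_add])
    (fun _ _ _ => by simp only [Pi.smul_apply, smul_eq_mul, mul_sum, mul_left_comm])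

section Iterate

variable {X : ℕ → Type} {K : ∀ t, (X (t + 1) → ℝ) → (X t → ℝ)}

theorem KiterQMMR_mem (Hs : ∀ t, Submodule ℝ (X t → ℝ)) (hKmem : ∀ t f, K t f ∈ Hs t)
    (t : ℕ) : ∀ k, ∀ f ∈ Hs (t + k), KiterQMMR K t k f ∈ Hs t
  | 0, _, hf => hf
  | k + 1, f, _ => KiterQMMR_mem Hs hKmem t k _ (hKmem (t + k) f)

theorem isLinearMap_KiterQMMR (hK : ∀ t, IsLinearMap ℝ (K t)) (t : ℕ) :
    ∀ k, IsLinearMap ℝ (KiterQMMR K t k)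
  | 0 => ⟨fun _ _ => rfl, fun _ _ => rfl⟩
  | k + 1 => by
    have ih := isLinearMap_KiterQMMR hK t k
    exact ⟨fun f g => by simp only [KiterQMMR, (hK _).map_add, ih.map_add],
      fun c f => by simp only [KiterQMMR, (hK _).map_smul, ih.map_smul]⟩

end Iterate

section Chain

variable {X : ℕ → Type} [∀ t, Fintype (X t)] {μ : ∀ t, X t → ℝ} {P : ∀ t, X t → X (t + 1) → ℝ}
  {Hs : ∀ t, Submodule ℝ (X t → ℝ)} {K : ∀ t, (X (t + 1) → ℝ) → (X t → ℝ)} {w : ∀ t, X t → ℝ}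

theorem sum_weight_mul_eq_sum_weight_mul_KiterQMMR (hKmem : ∀ t f, K t f ∈ Hs t)
    (hKproj : ∀ t f, ∀ q ∈ Hs t, ∑ x, μ t x * ((∑ y, P t x y * f y) - K t f x) * q x = 0)
    (s : ℕ) : ∀ k, (∀ t, s ≤ t → t < s + k → w t ∈ Hs t) →
      (∀ t, s ≤ t → t < s + k → ∀ f ∈ Hs (t + 1),
        ∑ y, μ (t + 1) y * w (t + 1) y * f y = ∑ x, μ t x * w t x * ∑ y, P t x y * f y) →
      ∀ f ∈ Hs (s + k),
        ∑ y, μ (s + k) y * w (s + k) y * f y = ∑ y, μ s y * w s y * KiterQMMR K s k f y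
  | 0, _, _, _, _ => rfl
  | k + 1, hwmem, hmatch, f, hf => by
    have hback : ∑ x, μ (s + k) x * w (s + k) x * ∑ y, P (s + k) x y * f y =
        ∑ x, μ (s + k) x * w (s + k) x * K (s + k) f x := by
      rw [← sub_eq_zero, ← sum_sub_distrib,
        ← hKproj (s + k) f _ (hwmem (s + k) le_self_add (by omega))]
      exact sum_congr rfl fun _ _ => by ring
    refine (hmatch (s + k) le_self_add (by omega) f hf).trans (hback.trans ?_)
    exact sum_weight_mul_eq_sum_weight_mul_KiterQMMR hKmem hKproj s k
      (fun t h₁ _ => hwmem t h₁ (by omega)) (fun t h₁ _ => hmatch t h₁ (by omega))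
      _ (hKmem _ f)

end Chain

section SupNorm

variable {ι κ : Type*} [Fintype ι] [Fintype κ]

theorem iSup_abs_eq_norm (g : ι → ℝ) : ⨆ x, |g x| = ‖g‖ := by
  refine le_antisymm (Real.iSup_le (fun x => norm_le_pi_norm g x) (norm_nonneg g)) ?_
  refine (pi_norm_le_iff_of_nonneg (Real.iSup_nonneg fun x => abs_nonneg (g x))).2 fun x => ?_
  exact le_ciSup (f := fun x => |g x|) (Set.finite_range _).bddAbove x

theorem abs_sum_mul_le_iSup_abs {p : ι → ℝ} (hp0 : ∀ y, 0 ≤ p y) (hp1 : ∑ y, p y = 1)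
    (g : ι → ℝ) : |∑ y, p y * g y| ≤ ⨆ y, |g y| := calc
  |∑ y, p y * g y| ≤ ∑ y, |p y * g y| := abs_sum_le_sum_abs _ _
  _ = ∑ y, p y * |g y| := sum_congr rfl fun y _ => by rw [abs_mul, abs_of_nonneg (hp0 y)]
  _ ≤ ∑ y, p y * ⨆ y, |g y| := sum_le_sum fun y _ => mul_le_mul_of_nonneg_left
    (le_ciSup (f := fun y => |g y|) (Set.finite_range _).bddAbove y) (hp0 y)
  _ = ⨆ y, |g y| := by rw [← sum_mul, hp1, one_mul]

theorem exists_iSup_abs_le_of_isLinearMap {T : (ι → ℝ) → κ → ℝ} (hT : IsLinearMap ℝ T) :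
    ∃ C, ∀ f, (⨆ y, |f y|) ≤ 1 → (⨆ x, |T f x|) ≤ C := by
  let L := LinearMap.toContinuousLinearMap (hT.mk' T)
  refine ⟨‖L‖, fun f hf => ?_⟩
  rw [iSup_abs_eq_norm] at hf ⊢
  calc ‖T f‖ = ‖L f‖ := rfl
    _ ≤ ‖L‖ * ‖f‖ := L.le_opNorm f
    _ ≤ ‖L‖ := mul_le_of_le_one_right (norm_nonneg _) hf

end SupNorm

theorem stmt_13_general (X : ℕ → Type) [∀ t, Fintype (X t)]
    [Unique (X 0)]
    (μ : ∀ t, X t → ℝ)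
    (hμmass : μ 0 default = 1)
    (P : ∀ t, X t → X (t + 1) → ℝ)
    (hP0 : ∀ t x y, 0 ≤ P t x y) (hP1 : ∀ t x, ∑ y, P t x y = 1)
    (Hs : ∀ t, Submodule ℝ (X t → ℝ))
    (hnorm : ∀ t, ∀ f ∈ Hs t, (∑ x, μ t x * f x ^ 2 = 0) → f = 0)
    (K : ∀ t, (X (t + 1) → ℝ) → (X t → ℝ))
    (hKmem : ∀ t f, K t f ∈ Hs t)
    (hKproj : ∀ t f, ∀ q ∈ Hs t,
      ∑ x, μ t x * ((∑ y, P t x y * f y) - K t f x) * q x = 0)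
    (k : ℕ)
    (w : ∀ t, X t → ℝ)
    (hw0 : ∀ x, w 0 x = 1)
    (hwmem : ∀ t, 1 ≤ t → t ≤ 1 + k → w t ∈ Hs t)
    (hmatch : ∀ t, t + 1 ≤ 1 + k → ∀ f ∈ Hs (t + 1),
      ∑ y, μ (t + 1) y * w (t + 1) y * f y =
        ∑ x, μ t x * w t x * ∑ y, P t x y * f y) :
    (∀ f ∈ Hs (1 + k),
      |∑ y, μ (1 + k) y * w (1 + k) y * f y| ≤ ⨆ x : X 1, |KiterQMMR K 1 k f x|) ∧
    sSup {r : ℝ | ∃ f ∈ Hs (1 + k), (⨆ y, |f y|) ≤ 1 ∧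
        r = |∑ y, μ (1 + k) y * w (1 + k) y * f y|} ≤
      sSup {r : ℝ | ∃ f ∈ Hs (1 + k), (⨆ y, |f y|) ≤ 1 ∧
        r = ⨆ x : X 1, |KiterQMMR K 1 k f x|} := by
  have hK : ∀ t, IsLinearMap ℝ (K t) := fun t =>
    isLinearMap_of_residual_orthogonal (B := weightedForm (μ t))
      (fun g hg hg0 => hnorm t g hg (by simpa [weightedForm, sq, mul_assoc] using hg0))
      (Matrix.mulVecLin (P t)) (hKmem t) (hKproj t)
  have hbound : ∀ f ∈ Hs (1 + k),
      |∑ y, μ (1 + k) y * w (1 + k) y * f y| ≤ ⨆ x : X 1, |KiterQMMR K 1 k f x| := by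
    intro f hf
    have hKf := KiterQMMR_mem Hs hKmem 1 k f hf
    rw [sum_weight_mul_eq_sum_weight_mul_KiterQMMR hKmem hKproj 1 k
        (fun t h₁ h₂ => hwmem t h₁ h₂.le) (fun t _ h => hmatch t (by omega)) f hf,
      hmatch 0 (by omega) _ hKf, Fintype.sum_unique, hμmass, hw0, one_mul, one_mul]
    exact abs_sum_mul_le_iSup_abs (hP0 0 default) (hP1 0 default) _
  refine ⟨hbound, ?_⟩
  obtain ⟨C, hC⟩ := exists_iSup_abs_le_of_isLinearMap (isLinearMap_KiterQMMR hK 1 k)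
  have hbdd : BddAbove {r : ℝ | ∃ f ∈ Hs (1 + k), (⨆ y, |f y|) ≤ 1 ∧
      r = ⨆ x : X 1, |KiterQMMR K 1 k f x|} :=
    ⟨C, by rintro _ ⟨f, -, hf1, rfl⟩; exact hC f hf1⟩
  refine csSup_le ⟨0, 0, zero_mem _, by simp, by simp⟩ ?_
  rintro _ ⟨f, hf, hf1, rfl⟩
  exact le_csSup_of_le hbdd ⟨f, hf, hf1, rfl⟩ (hbound f hf)

/-- weight size bounded by multi-step backup norm: if the population
weights `w_t ∈ H_t` satisfy the exact matching equations, `w₀ ≡ 1`, and `X₀ = {x₀}` with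
`μ₀` the point mass, then for the last level `h = 1 + k` and every `f ∈ H_h`,
`|⟨w_h, f⟩_{μ_h}| ≤ ‖K₁⋯K_{h−1} f‖_∞`; in particular
`sup{|⟨w_h,f⟩| : f ∈ H_h, ‖f‖_∞ ≤ 1} ≤ ρ_{1:h}`. -/
theorem stmt_13 (X : ℕ → Type) [∀ t, Fintype (X t)] [∀ t, Nonempty (X t)]
    [Unique (X 0)]
    (μ : ∀ t, X t → ℝ)
    (hμ0 : ∀ t x, 0 ≤ μ t x) (hμ1 : ∀ t, ∑ x, μ t x = 1)
    (hμmass : μ 0 default = 1)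
    (P : ∀ t, X t → X (t + 1) → ℝ)
    (hP0 : ∀ t x y, 0 ≤ P t x y) (hP1 : ∀ t x, ∑ y, P t x y = 1)
    (Hs : ∀ t, Submodule ℝ (X t → ℝ))
    (hnorm : ∀ t, ∀ f ∈ Hs t, (∑ x, μ t x * f x ^ 2 = 0) → f = 0)
    (K : ∀ t, (X (t + 1) → ℝ) → (X t → ℝ))
    (hKmem : ∀ t f, K t f ∈ Hs t)
    (hKproj : ∀ t f, ∀ q ∈ Hs t,
      ∑ x, μ t x * ((∑ y, P t x y * f y) - K t f x) * q x = 0)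
    (k : ℕ)
    (w : ∀ t, X t → ℝ)
    (hw0 : ∀ x, w 0 x = 1)
    (hwmem : ∀ t, 1 ≤ t → t ≤ 1 + k → w t ∈ Hs t)
    (hmatch : ∀ t, t + 1 ≤ 1 + k → ∀ f ∈ Hs (t + 1),
      ∑ y, μ (t + 1) y * w (t + 1) y * f y =
        ∑ x, μ t x * w t x * ∑ y, P t x y * f y) :
    (∀ f ∈ Hs (1 + k),
      |∑ y, μ (1 + k) y * w (1 + k) y * f y| ≤ ⨆ x : X 1, |KiterQMMR K 1 k f x|) ∧
    sSup {r : ℝ | ∃ f ∈ Hs (1 + k), (⨆ y, |f y|) ≤ 1 ∧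
        r = |∑ y, μ (1 + k) y * w (1 + k) y * f y|} ≤
      sSup {r : ℝ | ∃ f ∈ Hs (1 + k), (⨆ y, |f y|) ≤ 1 ∧
        r = ⨆ x : X 1, |KiterQMMR K 1 k f x|} :=
  stmt_13_general X μ hμmass P hP0 hP1 Hs hnorm K hKmem hKproj k w hw0 hwmem hmatch
end

section
/- Assume in addition the backup-closure (Bellman completeness) property: P_{t−1} f ∈ H_{t−1} for every f ∈ H_t and every t ∈ {1,…,h}, where H_0 is all functions on the singleton X_0 = {x₀}. Let w_0 ≡ 1 and, for t = 1,…,h, let w_t ∈ H_t satisfy the exact population matching equations ⟨w_t, f⟩_{μ_t} = Σ_{x∈X_{t−1}} μ_{t−1}(x)·w_{t−1}(x)·(P_{t−1}f)(x) for all f ∈ H_t. Define the occupancy distributions by d_0^π := the point mass at x₀ and d_t^π(y) := Σ_{x∈X_{t−1}} d_{t−1}^π(x)·P_{t−1}(y|x). Then for every f ∈ H_h, ⟨w_h, f⟩_{μ_h} = Σ_{y∈X_h} d_h^π(y)·f(y); that is, w_h is exactly a marginalized importance sampling weight for the functions in H_h. -/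
/-! By induction on `t`, `⟨w_t, f⟩_{μ_t} = Σ_y d_t^π(y) f(y)` for all `f ∈ H_t`. The matching
equation turns the left side at `t + 1` into the weighted sum of `P_t f` at time `t`;
Bellman completeness puts `P_t f` in `H_t`, so the induction hypothesis applies, and
exchanging the order of summation gives `Σ_y d_{t+1}^π(y) f(y)`. At `t = 0` both sides are
evaluation at `x₀`, for every function on `X₀`. -/

theorem sum_vecMul_mul_eq_sum_mul_mulVec {R α β : Type*} [NonUnitalSemiring R]
    [Fintype α] [Fintype β] (d : α → R) (P : α → β → R) (f : β → R) :
    ∑ y, (∑ x, d x * P x y) * f y = ∑ x, d x * ∑ y, P x y * f y :=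
  (Matrix.dotProduct_mulVec d (Matrix.of P) f).symm

theorem stmt_14_general (X : ℕ → Type) [∀ t, Fintype (X t)] [Unique (X 0)]
    (h : ℕ) (hh : 1 ≤ h)
    (μ : ∀ t, X t → ℝ)
    (hμmass : μ 0 default = 1)
    (P : ∀ t, X t → X (t + 1) → ℝ)
    (Hs : ∀ t, Submodule ℝ (X t → ℝ))
    (hcomplete : ∀ t, 1 ≤ t → t + 1 ≤ h → ∀ f ∈ Hs (t + 1),
      (fun x => ∑ y, P t x y * f y) ∈ Hs t)
    (w : ∀ t, X t → ℝ)
    (hw0 : ∀ x, w 0 x = 1)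
    (hmatch : ∀ t, t + 1 ≤ h → ∀ f ∈ Hs (t + 1),
      ∑ y, μ (t + 1) y * w (t + 1) y * f y =
        ∑ x, μ t x * w t x * ∑ y, P t x y * f y)
    (dpi : ∀ t, X t → ℝ)
    (hdpi0 : ∀ x, dpi 0 x = 1)
    (hdpiStep : ∀ t y, dpi (t + 1) y = ∑ x, dpi t x * P t x y) :
    ∀ f ∈ Hs h, ∑ y, μ h y * w h y * f y = ∑ y, dpi h y * f y := by
  have base : ∀ g : X 0 → ℝ, ∑ x, μ 0 x * w 0 x * g x = ∑ x, dpi 0 x * g x := by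
    simp [hμmass, hw0, hdpi0]
  suffices key : ∀ t, t + 1 ≤ h → ∀ f ∈ Hs (t + 1),
      ∑ y, μ (t + 1) y * w (t + 1) y * f y = ∑ y, dpi (t + 1) y * f y by
    obtain ⟨t, rfl⟩ := Nat.exists_eq_add_of_le' hh
    exact key t le_rfl
  intro t
  induction t with
  | zero =>
    intro h1 f hf
    rw [hmatch 0 h1 f hf, base]
    simp only [hdpiStep, sum_vecMul_mul_eq_sum_mul_mulVec]
  | succ n ih =>
    intro hn f hf
    rw [hmatch (n + 1) hn f hf, ih (by omega) _ (hcomplete (n + 1) (by omega) hn f hf)]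
    simp only [hdpiStep, sum_vecMul_mul_eq_sum_mul_mulVec]

/-- under Bellman completeness the population weight is an MIS
weight: if additionally `P_{t−1} f ∈ H_{t−1}` for every `f ∈ H_t` (with `H₀` all
functions on the singleton `X₀`), then the population weight `w_h` represents the
occupancy distribution: `⟨w_h, f⟩_{μ_h} = Σ_y d_h^π(y) f(y)` for every `f ∈ H_h`. -/
theorem stmt_14 (X : ℕ → Type) [∀ t, Fintype (X t)] [Unique (X 0)]
    (h : ℕ) (hh : 1 ≤ h)
    (μ : ∀ t, X t → ℝ)
    (hμ0 : ∀ t x, 0 ≤ μ t x) (hμ1 : ∀ t, ∑ x, μ t x = 1)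
    (hμmass : μ 0 default = 1)
    (P : ∀ t, X t → X (t + 1) → ℝ)
    (hP0 : ∀ t x y, 0 ≤ P t x y) (hP1 : ∀ t x, ∑ y, P t x y = 1)
    (Hs : ∀ t, Submodule ℝ (X t → ℝ))
    (hnorm : ∀ t, ∀ f ∈ Hs t, (∑ x, μ t x * f x ^ 2 = 0) → f = 0)
    (hcomplete : ∀ t, 1 ≤ t → t + 1 ≤ h → ∀ f ∈ Hs (t + 1),
      (fun x => ∑ y, P t x y * f y) ∈ Hs t)
    (w : ∀ t, X t → ℝ)
    (hw0 : ∀ x, w 0 x = 1)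
    (hwmem : ∀ t, 1 ≤ t → t ≤ h → w t ∈ Hs t)
    (hmatch : ∀ t, t + 1 ≤ h → ∀ f ∈ Hs (t + 1),
      ∑ y, μ (t + 1) y * w (t + 1) y * f y =
        ∑ x, μ t x * w t x * ∑ y, P t x y * f y)
    (dpi : ∀ t, X t → ℝ)
    (hdpi0 : ∀ x, dpi 0 x = 1)
    (hdpiStep : ∀ t y, dpi (t + 1) y = ∑ x, dpi t x * P t x y) :
    ∀ f ∈ Hs h, ∑ y, μ h y * w h y * f y = ∑ y, dpi h y * f y :=
  stmt_14_general X h hh μ hμmass P Hs hcomplete w hw0 hmatch dpi hdpi0 hdpiStep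
end

section
/- Assume the near-isometry condition |⟨u,v⟩_{[n]} − ⟨u,v⟩_μ| ≤ χ·‖u‖_μ·‖v‖_μ holds for all u,v ∈ H with some χ ≤ 1/2. Let w⋆, w̃, w̄ ∈ H be such that ⟨w̃, f⟩_μ = ⟨w̄, f⟩_{[n]} for every f ∈ H. Then ‖w̄ − w⋆‖_{[n]} ≤ (1 + 3χ)·‖w̃ − w⋆‖_μ + 2χ·‖w⋆‖_μ. -/
open Finset

/-!
Write `f = w̄ - w⋆`. The representer identity turns `‖f‖²_{[n]} = ⟨w̄, f⟩_{[n]} - ⟨w⋆, f⟩_{[n]}`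
into `⟨w̃ - w⋆, f⟩_μ + (⟨w⋆, f⟩_μ - ⟨w⋆, f⟩_{[n]})`, which Cauchy–Schwarz and the near-isometry
bound by `E ‖f‖_μ` with `E = ‖w̃ - w⋆‖_μ + χ ‖w⋆‖_μ`. The near-isometry applied to `f` itself gives
`(1 - χ) ‖f‖²_μ ≤ ‖f‖²_{[n]}`, so `‖f‖_μ` and then `‖f‖_{[n]}` are at most `(1 + 2χ) E`, which is
below the claimed bound as long as `χ ≤ 1/2`. A negative `χ` forces `‖·‖_μ` to vanish on `H`.
-/

lemma le_one_add_two_mul_of_sq_le_mul {a b E χ : ℝ} (hχ0 : 0 ≤ χ) (hχ : χ ≤ 1 / 2) (hb0 : 0 ≤ b)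
    (hE : 0 ≤ E) (hup : a ^ 2 ≤ E * b) (hlow : (1 - χ) * b ^ 2 ≤ a ^ 2) :
    a ≤ (1 + 2 * χ) * E := by
  have hb : (1 - χ) * b ≤ E := by
    rcases hb0.eq_or_lt with rfl | hbpos
    · simpa using hE
    · nlinarith
  -- `1 ≤ (1 + 2χ)(1 - χ)` exactly when `χ ≤ 1/2`
  have hb' : b ≤ (1 + 2 * χ) * E := by
    nlinarith [mul_nonneg (mul_nonneg hχ0 (by linarith : (0:ℝ) ≤ 1 - 2 * χ)) hb0,
      mul_le_mul_of_nonneg_left hb (by linarith : (0:ℝ) ≤ 1 + 2 * χ)]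
  have hsq : a ^ 2 ≤ ((1 + 2 * χ) * E) ^ 2 := by nlinarith
  exact le_of_pow_le_pow_left₀ two_ne_zero (by positivity) hsq

namespace TrackingError

noncomputable section

variable {X : Type*} {n : ℕ}

-- `popInner μ`, `empInner xs` are `⟨·,·⟩_μ` (population) and `⟨·,·⟩_{[n]}` (empirical).
def popInner [Fintype X] (μ u v : X → ℝ) : ℝ := ∑ x, μ x * u x * v x

def popNorm [Fintype X] (μ u : X → ℝ) : ℝ := √(∑ x, μ x * u x ^ 2)

def empInner (xs : Fin n → X) (u v : X → ℝ) : ℝ := (n : ℝ)⁻¹ * ∑ i, u (xs i) * v (xs i)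

def empNorm (xs : Fin n → X) (u : X → ℝ) : ℝ := √((n : ℝ)⁻¹ * ∑ i, u (xs i) ^ 2)

def NearIsometryOn [Fintype X] (μ : X → ℝ) (xs : Fin n → X) (χ : ℝ) (H : Submodule ℝ (X → ℝ)) :
    Prop :=
  ∀ u ∈ H, ∀ v ∈ H, |empInner xs u v - popInner μ u v| ≤ χ * popNorm μ u * popNorm μ v

end

lemma empInner_sub_left (xs : Fin n → X) (u v w : X → ℝ) :
    empInner xs (u - v) w = empInner xs u w - empInner xs v w := by
  simp only [empInner, ← mul_sub, ← sum_sub_distrib, Pi.sub_apply, sub_mul]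

lemma empNorm_sq (xs : Fin n → X) (u : X → ℝ) : empNorm xs u ^ 2 = empInner xs u u := by
  rw [empNorm, Real.sq_sqrt (by positivity), empInner]
  simp only [sq]

lemma empNorm_nonneg (xs : Fin n → X) (u : X → ℝ) : 0 ≤ empNorm xs u := Real.sqrt_nonneg _

variable [Fintype X] {μ : X → ℝ}

lemma popNorm_nonneg (μ u : X → ℝ) : 0 ≤ popNorm μ u := Real.sqrt_nonneg _

lemma popInner_sub_left (μ u v w : X → ℝ) :
    popInner μ (u - v) w = popInner μ u w - popInner μ v w := by
  simp only [popInner, ← sum_sub_distrib, Pi.sub_apply]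
  exact sum_congr rfl fun _ _ ↦ by ring

lemma popNorm_sq (hμ : ∀ x, 0 ≤ μ x) (u : X → ℝ) : popNorm μ u ^ 2 = popInner μ u u := by
  rw [popNorm, Real.sq_sqrt (sum_nonneg fun x _ ↦ mul_nonneg (hμ x) (sq_nonneg _))]
  exact sum_congr rfl fun _ _ ↦ by ring

lemma popInner_le_popNorm_mul_popNorm (hμ : ∀ x, 0 ≤ μ x) (u v : X → ℝ) :
    popInner μ u v ≤ popNorm μ u * popNorm μ v := by
  refine (Real.le_sqrt_of_sq_le <| sum_sq_le_sum_mul_sum_of_sq_le_mul univ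
    (fun x _ ↦ mul_nonneg (hμ x) (sq_nonneg (u x)))
    (fun x _ ↦ mul_nonneg (hμ x) (sq_nonneg (v x))) fun x _ ↦ le_of_eq (by ring)).trans_eq
    (Real.sqrt_mul (sum_nonneg fun x _ ↦ mul_nonneg (hμ x) (sq_nonneg _)) _)

variable {xs : Fin n → X} {χ : ℝ} {H : Submodule ℝ (X → ℝ)}

lemma NearIsometryOn.popNorm_eq_zero (hiso : NearIsometryOn μ xs χ H) (hχ : χ < 0)
    {u : X → ℝ} (hu : u ∈ H) : popNorm μ u = 0 := by
  have h := (abs_nonneg _).trans (hiso u hu u hu)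
  rw [mul_assoc] at h
  exact mul_self_eq_zero.1 (le_antisymm (nonpos_of_mul_nonneg_right h hχ) (mul_self_nonneg _))

lemma NearIsometryOn.one_sub_mul_popNorm_sq_le (hμ : ∀ x, 0 ≤ μ x)
    (hiso : NearIsometryOn μ xs χ H) {u : X → ℝ} (hu : u ∈ H) :
    (1 - χ) * popNorm μ u ^ 2 ≤ empNorm xs u ^ 2 := by
  have h := (abs_le.1 (hiso u hu u hu)).1
  rw [← popNorm_sq hμ] at h
  rw [empNorm_sq]
  linear_combination h

lemma NearIsometryOn.empNorm_sq_le (hμ : ∀ x, 0 ≤ μ x) (hiso : NearIsometryOn μ xs χ H)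
    {wstar wtil wbar : X → ℝ} (hwstar : wstar ∈ H) (hf : wbar - wstar ∈ H)
    (hrep : popInner μ wtil (wbar - wstar) = empInner xs wbar (wbar - wstar)) :
    empNorm xs (wbar - wstar) ^ 2 ≤
      (popNorm μ (wtil - wstar) + χ * popNorm μ wstar) * popNorm μ (wbar - wstar) := by
  set f := wbar - wstar
  have hCS := popInner_le_popNorm_mul_popNorm hμ (wtil - wstar) f
  have hstar := (abs_le.1 (hiso wstar hwstar f hf)).1
  calc empNorm xs f ^ 2
      = popInner μ (wtil - wstar) f + (popInner μ wstar f - empInner xs wstar f) := by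
        rw [empNorm_sq, empInner_sub_left, ← hrep, popInner_sub_left]; ring
    _ ≤ _ := by linarith

end TrackingError

open TrackingError in
theorem stmt_18_general {X : Type*} [Fintype X] (n : ℕ)
    (μ : X → ℝ) (hμ0 : ∀ x, 0 ≤ μ x)
    (H : Submodule ℝ (X → ℝ))
    (xs : Fin n → X) (χ : ℝ) (hχ : χ ≤ 1 / 2)
    (hiso : ∀ u ∈ H, ∀ v ∈ H,
      |(n : ℝ)⁻¹ * ∑ i, u (xs i) * v (xs i) - ∑ x, μ x * u x * v x| ≤
        χ * Real.sqrt (∑ x, μ x * u x ^ 2) * Real.sqrt (∑ x, μ x * v x ^ 2))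
    (wstar wtil wbar : X → ℝ)
    (hwstar : wstar ∈ H) (hwtil : wtil ∈ H) (hwbar : wbar ∈ H)
    (hrep : ∀ f ∈ H, ∑ x, μ x * wtil x * f x = (n : ℝ)⁻¹ * ∑ i, wbar (xs i) * f (xs i)) :
    Real.sqrt ((n : ℝ)⁻¹ * ∑ i, (wbar (xs i) - wstar (xs i)) ^ 2) ≤
      (1 + 3 * χ) * Real.sqrt (∑ x, μ x * (wtil x - wstar x) ^ 2) +
        2 * χ * Real.sqrt (∑ x, μ x * wstar x ^ 2) := by
  change NearIsometryOn μ xs χ H at hiso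
  change empNorm xs (wbar - wstar) ≤
    (1 + 3 * χ) * popNorm μ (wtil - wstar) + 2 * χ * popNorm μ wstar
  have hf : wbar - wstar ∈ H := sub_mem hwbar hwstar
  have hup := hiso.empNorm_sq_le hμ0 hwstar hf (hrep _ hf)
  rcases lt_or_ge χ 0 with hneg | hχ0
  · rw [hiso.popNorm_eq_zero hneg hf, mul_zero] at hup
    rw [hiso.popNorm_eq_zero hneg (sub_mem hwtil hwstar), hiso.popNorm_eq_zero hneg hwstar]
    nlinarith
  · have hD := popNorm_nonneg μ (wtil - wstar)
    have hS := popNorm_nonneg μ wstar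
    calc empNorm xs (wbar - wstar)
        ≤ (1 + 2 * χ) * (popNorm μ (wtil - wstar) + χ * popNorm μ wstar) :=
          le_one_add_two_mul_of_sq_le_mul hχ0 hχ (popNorm_nonneg _ _) (by positivity) hup
            (hiso.one_sub_mul_popNorm_sq_le hμ0 hf)
      _ ≤ (1 + 3 * χ) * popNorm μ (wtil - wstar) + 2 * χ * popNorm μ wstar := by
          nlinarith [mul_nonneg hχ0 hD, mul_nonneg (mul_nonneg hχ0 (by linarith : 0 ≤ 1 - 2 * χ)) hS]

/-- tracking error conversion: under the near-isometry condition
`|⟨u,v⟩_{[n]} − ⟨u,v⟩_μ| ≤ χ‖u‖_μ‖v‖_μ` on `H` with `χ ≤ 1/2`, if `w⋆, w̃, w̄ ∈ H`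
and `⟨w̃,f⟩_μ = ⟨w̄,f⟩_{[n]}` for all `f ∈ H`, then
`‖w̄ − w⋆‖_{[n]} ≤ (1+3χ)‖w̃ − w⋆‖_μ + 2χ‖w⋆‖_μ`. -/
theorem stmt_18 {X : Type*} [Fintype X] (n : ℕ) (hn : 0 < n)
    (μ : X → ℝ) (hμ0 : ∀ x, 0 ≤ μ x) (hμ1 : ∑ x, μ x = 1)
    (H : Submodule ℝ (X → ℝ))
    (hnorm : ∀ f ∈ H, (∑ x, μ x * f x ^ 2 = 0) → f = 0)
    (xs : Fin n → X) (χ : ℝ) (hχ : χ ≤ 1 / 2)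
    (hiso : ∀ u ∈ H, ∀ v ∈ H,
      |(n : ℝ)⁻¹ * ∑ i, u (xs i) * v (xs i) - ∑ x, μ x * u x * v x| ≤
        χ * Real.sqrt (∑ x, μ x * u x ^ 2) * Real.sqrt (∑ x, μ x * v x ^ 2))
    (wstar wtil wbar : X → ℝ)
    (hwstar : wstar ∈ H) (hwtil : wtil ∈ H) (hwbar : wbar ∈ H)
    (hrep : ∀ f ∈ H, ∑ x, μ x * wtil x * f x = (n : ℝ)⁻¹ * ∑ i, wbar (xs i) * f (xs i)) :
    Real.sqrt ((n : ℝ)⁻¹ * ∑ i, (wbar (xs i) - wstar (xs i)) ^ 2) ≤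
      (1 + 3 * χ) * Real.sqrt (∑ x, μ x * (wtil x - wstar x) ^ 2) +
        2 * χ * Real.sqrt (∑ x, μ x * wstar x ^ 2) :=
  stmt_18_general n μ hμ0 H xs χ hχ hiso wstar wtil wbar hwstar hwtil hwbar hrep
end

section
/- Let Z^{(1)},…,Z^{(n)} be n i.i.d. copies of a random vector Z = (Z_1,…,Z_H) with Z_h ∈ X_h and Z_h distributed according to μ_h for each h. Define χ_h := (4/3)·(√(2κ_h·log(8H·N_h²/δ)/n) + 4κ_h·log(8H·N_h²/δ)/(3n)). Then with probability at least 1−δ/4, simultaneously for all h ∈ {1,…,H} and all u,v ∈ H_h, |(1/n)·Σ_{i=1}^n u(Z_h^{(i)})·v(Z_h^{(i)}) − ⟨u,v⟩_{μ_h}| ≤ χ_h·‖u‖_{μ_h}·‖v‖_{μ_h}; in particular, taking u = v, (1−χ_h)·‖u‖_{μ_h}² ≤ (1/n)·Σ_{i=1}^n u(Z_h^{(i)})² ≤ (1+χ_h)·‖u‖_{μ_h}² for all u ∈ H_h. -/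
set_option maxHeartbeats 1000000

open Finset MeasureTheory ProbabilityTheory
open scoped ENNReal

private lemma fact_ge (i : ℕ) : 2 * 3 ^ i ≤ Nat.factorial (i + 2) := by
  induction i with
  | zero => simp [Nat.factorial]
  | succ k ih =>
    have : Nat.factorial (k + 3) = (k + 3) * Nat.factorial (k + 2) := rfl
    calc 2 * 3 ^ (k+1) = 3 * (2 * 3 ^ k) := by ring
    _ ≤ 3 * Nat.factorial (k + 2) := by omega
    _ ≤ (k + 3) * Nat.factorial (k + 2) := by
        have := Nat.factorial_pos (k+2); nlinarith
    _ = Nat.factorial (k + 3) := rfl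

private lemma exp_quad {y : ℝ} (hy : |y| < 3) :
    Real.exp y ≤ 1 + y + y ^ 2 / (2 * (1 - |y| / 3)) := by
  have hexp : Real.exp y = ∑' n : ℕ, y ^ n / n.factorial := by
    rw [Real.exp_eq_exp_ℝ, NormedSpace.exp_eq_tsum_div]
  have hsumm : Summable (fun n : ℕ => y ^ n / n.factorial) :=
    Real.summable_pow_div_factorial y
  have hsplit := Summable.sum_add_tsum_nat_add 2 hsumm
  have hq : (0:ℝ) ≤ |y| / 3 := by positivity
  have hq1 : |y| / 3 < 1 := by linarith
  have hsummg : Summable (fun i : ℕ => y ^ 2 / 2 * (|y| / 3) ^ i) :=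
    (summable_geometric_of_lt_one hq hq1).mul_left _
  have htermbd : ∀ i : ℕ, |y ^ (i + 2) / (i + 2).factorial| ≤ y ^ 2 / 2 * (|y| / 3) ^ i := by
    intro i
    have h1 : |y ^ (i + 2) / (i+2).factorial| = |y| ^ (i + 2) / (i+2).factorial := by
      rw [abs_div, abs_pow, Nat.abs_cast]
    rw [h1]
    have h2 : |y| ^ (i + 2) = y ^ 2 * |y| ^ i := by
      rw [pow_add, mul_comm, sq_abs]
    have h3 : (2 * 3 ^ i : ℝ) ≤ (i + 2).factorial := by exact_mod_cast fact_ge i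
    have h4 : (0:ℝ) < 2 * 3 ^ i := by positivity
    rw [h2]
    have h5 : y ^ 2 * |y| ^ i / (i+2).factorial ≤ y ^ 2 * |y| ^ i / (2 * 3 ^ i) := by
      apply div_le_div_of_nonneg_left _ h4 h3
      positivity
    refine h5.trans (le_of_eq ?_)
    rw [div_pow]
    ring
  have htail : |∑' i : ℕ, y ^ (i + 2) / (i + 2).factorial| ≤ y ^ 2 / (2 * (1 - |y| / 3)) := by
    have hsumabs : Summable (fun i : ℕ => |y ^ (i + 2) / (i + 2).factorial|) := by
      apply Summable.of_nonneg_of_le (fun i => abs_nonneg _) htermbd hsummg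
    calc |∑' i : ℕ, y ^ (i + 2) / (i + 2).factorial|
        ≤ ∑' i : ℕ, |y ^ (i + 2) / (i + 2).factorial| := by
          have := norm_tsum_le_tsum_norm (f := fun i : ℕ => y ^ (i + 2) / (i + 2).factorial)
            (by simpa only [Real.norm_eq_abs] using hsumabs)
          simpa only [Real.norm_eq_abs] using this
      _ ≤ ∑' i : ℕ, y ^ 2 / 2 * (|y| / 3) ^ i := Summable.tsum_le_tsum htermbd hsumabs hsummg
      _ = y ^ 2 / 2 * (1 - |y| / 3)⁻¹ := by
          rw [tsum_mul_left, tsum_geometric_of_lt_one hq hq1]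
      _ = y ^ 2 / (2 * (1 - |y| / 3)) := by
          rw [← div_eq_mul_inv, div_div]
  have hfirst : ∑ i ∈ Finset.range 2, y ^ i / (i.factorial : ℝ) = 1 + y := by
    simp [Finset.sum_range_succ]
  rw [hexp, ← hsplit, hfirst]
  have := abs_le.mp htail
  linarith [this.2]

private lemma mgf_le {Ω : Type*} [MeasurableSpace Ω] (Pr : Measure Ω) [IsProbabilityMeasure Pr]
    (X : Ω → ℝ) (hX : Measurable X) (b σ2 t : ℝ) (hb : 0 < b)
    (hbd : ∀ ω, |X ω| ≤ b) (hmean : ∫ ω, X ω ∂Pr = 0) (hvar : ∫ ω, (X ω) ^ 2 ∂Pr ≤ σ2)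
    (ht : 0 ≤ t) (htb : t * b < 3) :
    mgf X Pr t ≤ Real.exp (σ2 * t ^ 2 / (2 * (1 - t * b / 3))) := by
  have hden : 0 < 1 - t * b / 3 := by linarith
  set r : ℝ := (2 * (1 - t * b / 3))⁻¹ with hr
  have hr0 : 0 ≤ r := by positivity
  have hptwise : ∀ ω, Real.exp (t * X ω) ≤ 1 + t * X ω + t ^ 2 * r * X ω ^ 2 := by
    intro ω
    have habs : |t * X ω| ≤ t * b := by
      rw [abs_mul, abs_of_nonneg ht]
      exact mul_le_mul_of_nonneg_left (hbd ω) ht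
    have h1 : |t * X ω| < 3 := lt_of_le_of_lt habs htb
    refine (exp_quad h1).trans ?_
    have h2 : (t * X ω) ^ 2 / (2 * (1 - |t * X ω| / 3)) ≤ (t * X ω) ^ 2 * r := by
      rw [hr, ← div_eq_mul_inv]
      apply div_le_div_of_nonneg_left (sq_nonneg _) (by positivity)
      linarith
    have h3 : (t * X ω) ^ 2 * r = t ^ 2 * r * X ω ^ 2 := by ring
    linarith [h2, h3 ▸ h2]
  have hXint : Integrable X Pr := by
    refine (integrable_const b).mono' hX.aestronglyMeasurable ?_
    exact Filter.Eventually.of_forall fun ω => by simpa using hbd ω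
  have hX2int : Integrable (fun ω => (X ω) ^ 2) Pr := by
    refine (integrable_const (b ^ 2)).mono' (hX.pow_const 2).aestronglyMeasurable ?_
    refine Filter.Eventually.of_forall fun ω => ?_
    have h := hbd ω
    have h0 := abs_nonneg (X ω)
    simp only [Real.norm_eq_abs, abs_pow, sq_abs]
    nlinarith [sq_abs (X ω)]
  have hexpint : Integrable (fun ω => Real.exp (t * X ω)) Pr := by
    refine (integrable_const (Real.exp (t * b))).mono'
      ((hX.const_mul t).exp).aestronglyMeasurable ?_
    refine Filter.Eventually.of_forall fun ω => ?_
    rw [Real.norm_eq_abs, abs_of_pos (Real.exp_pos _), Real.exp_le_exp]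
    have := abs_le.mp (hbd ω)
    exact mul_le_mul_of_nonneg_left (this.2) ht
  have hrhsint : Integrable (fun ω => 1 + t * X ω + t ^ 2 * r * X ω ^ 2) Pr :=
    ((integrable_const 1).add (hXint.const_mul t)).add (hX2int.const_mul _)
  have hstep : mgf X Pr t ≤ ∫ ω, (1 + t * X ω + t ^ 2 * r * X ω ^ 2) ∂Pr :=
    integral_mono hexpint hrhsint hptwise
  have hcalc : ∫ ω, (1 + t * X ω + t ^ 2 * r * X ω ^ 2) ∂Pr
      = 1 + t ^ 2 * r * ∫ ω, (X ω) ^ 2 ∂Pr := by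
    have hI1 : Integrable (fun ω => 1 + t * X ω) Pr :=
      (integrable_const 1).add (hXint.const_mul t)
    have hI2 : Integrable (fun ω => t ^ 2 * r * X ω ^ 2) Pr := hX2int.const_mul _
    rw [integral_add hI1 hI2, integral_add (integrable_const 1) (hXint.const_mul t),
      integral_const, integral_const_mul, integral_const_mul, hmean]
    simp
  have hfin : mgf X Pr t ≤ 1 + t ^ 2 * r * σ2 := by
    rw [hcalc] at hstep
    have : t ^ 2 * r * ∫ ω, (X ω) ^ 2 ∂Pr ≤ t ^ 2 * r * σ2 :=
      mul_le_mul_of_nonneg_left hvar (by positivity)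
    linarith
  refine hfin.trans ?_
  have hexp := Real.add_one_le_exp (t ^ 2 * r * σ2)
  have heq : t ^ 2 * r * σ2 = σ2 * t ^ 2 / (2 * (1 - t * b / 3)) := by
    rw [hr, div_eq_mul_inv]; ring
  linarith [heq ▸ hexp]

private lemma bernstein_tail {Ω : Type*} [MeasurableSpace Ω] (Pr : Measure Ω)
    [IsProbabilityMeasure Pr] (n : ℕ) (X : Fin n → Ω → ℝ)
    (hmeas : ∀ i, Measurable (X i))
    (hindep : iIndepFun X Pr)
    (b σ2 ε : ℝ) (hσ : 0 < σ2) (hb : 0 < b) (hε : 0 ≤ ε)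
    (hbd : ∀ i ω, |X i ω| ≤ b)
    (hmean : ∀ i, ∫ ω, X i ω ∂Pr = 0)
    (hvar : ∀ i, ∫ ω, (X i ω) ^ 2 ∂Pr ≤ σ2) :
    (Pr {ω | (n : ℝ) * ε ≤ ∑ i, X i ω}).toReal ≤
      Real.exp (-((n : ℝ) * ε ^ 2 / (2 * (σ2 + b * ε / 3)))) := by
  set B : ℝ := σ2 + b * ε / 3 with hB
  have hBpos : 0 < B := by positivity
  set t : ℝ := ε / B with htdef
  have ht0 : 0 ≤ t := by positivity
  have htb : t * b < 3 := by
    rw [htdef, div_mul_eq_mul_div, div_lt_iff₀ hBpos]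
    have h3B : (3:ℝ) * B = 3 * σ2 + b * ε := by rw [hB]; ring
    nlinarith [mul_comm ε b]
  have hden : 1 - t * b / 3 = σ2 / B := by
    rw [htdef]; field_simp; ring
  -- bound each mgf
  have hmgf : ∀ i, mgf (X i) Pr t ≤ Real.exp (σ2 * t ^ 2 / (2 * (1 - t * b / 3))) :=
    fun i => mgf_le Pr (X i) (hmeas i) b σ2 t hb (hbd i) (hmean i) (hvar i) ht0 htb
  -- integrability of exp(t * X i)
  have hexpint : ∀ i, Integrable (fun ω => Real.exp (t * X i ω)) Pr := by
    intro i
    refine (integrable_const (Real.exp (t * b))).mono'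
      (((hmeas i).const_mul t).exp).aestronglyMeasurable ?_
    refine Filter.Eventually.of_forall fun ω => ?_
    rw [Real.norm_eq_abs, abs_of_pos (Real.exp_pos _), Real.exp_le_exp]
    exact mul_le_mul_of_nonneg_left (abs_le.mp (hbd i ω)).2 ht0
  have hSmeas : Measurable (∑ i, X i) := by
    have hfe : (∑ i, X i) = fun ω => ∑ i, X i ω := by
      ext ω; simp [Finset.sum_apply]
    rw [hfe]
    exact Finset.measurable_sum _ fun i _ => hmeas i
  have hSexpint : Integrable (fun ω => Real.exp (t * (∑ i, X i) ω)) Pr := by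
    refine (integrable_const (Real.exp (t * (n * b)))).mono'
      ((hSmeas.const_mul t).exp).aestronglyMeasurable ?_
    refine Filter.Eventually.of_forall fun ω => ?_
    rw [Real.norm_eq_abs, abs_of_pos (Real.exp_pos _), Real.exp_le_exp]
    apply mul_le_mul_of_nonneg_left _ ht0
    rw [Finset.sum_apply]
    calc ∑ i, X i ω ≤ ∑ i : Fin n, b := Finset.sum_le_sum fun i _ => (abs_le.mp (hbd i ω)).2
      _ = n * b := by simp [mul_comm]
  have hchernoff := measure_ge_le_exp_mul_mgf (μ := Pr) (X := ∑ i, X i) ((n : ℝ) * ε) ht0 hSexpint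
  have hset : {ω | (n : ℝ) * ε ≤ ∑ i, X i ω} = {ω | (n : ℝ) * ε ≤ (∑ i, X i) ω} := by
    ext ω; simp [Finset.sum_apply]
  rw [hset]
  refine hchernoff.trans ?_
  have hprod : mgf (∑ i, X i) Pr t = ∏ i, mgf (X i) Pr t := hindep.mgf_sum hmeas Finset.univ
  have hprodle : mgf (∑ i, X i) Pr t ≤ Real.exp ((n : ℝ) * (σ2 * t ^ 2 / (2 * (1 - t * b / 3)))) := by
    rw [hprod]
    calc ∏ i, mgf (X i) Pr t ≤ ∏ _i : Fin n, Real.exp (σ2 * t ^ 2 / (2 * (1 - t * b / 3))) :=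
          Finset.prod_le_prod (fun i _ => mgf_nonneg) (fun i _ => hmgf i)
      _ = Real.exp ((n : ℝ) * (σ2 * t ^ 2 / (2 * (1 - t * b / 3)))) := by
          rw [Finset.prod_const, ← Real.exp_nat_mul]; simp
  calc Real.exp (-t * ((n : ℝ) * ε)) * mgf (∑ i, X i) Pr t
      ≤ Real.exp (-t * ((n : ℝ) * ε)) * Real.exp ((n : ℝ) * (σ2 * t ^ 2 / (2 * (1 - t * b / 3)))) := by
        apply mul_le_mul_of_nonneg_left hprodle (le_of_lt (Real.exp_pos _))
    _ = Real.exp (-t * ((n : ℝ) * ε) + (n : ℝ) * (σ2 * t ^ 2 / (2 * (1 - t * b / 3)))) := by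
        rw [← Real.exp_add]
    _ = Real.exp (-((n : ℝ) * ε ^ 2 / (2 * B))) := by
        congr 1
        rw [hden, htdef]
        field_simp
        ring

private lemma integral_comp_fintype {Ω : Type*} [MeasurableSpace Ω] (Pr : Measure Ω)
    [IsProbabilityMeasure Pr] {α : Type} [Fintype α] [MeasurableSpace α]
    [DiscreteMeasurableSpace α] (T : Ω → α) (hT : Measurable T)
    (p : α → ℝ) (hp : ∀ x, (Pr {ω | T ω = x}).toReal = p x) (f : α → ℝ) :
    ∫ ω, f (T ω) ∂Pr = ∑ x, p x * f x := by
  have hprob : IsProbabilityMeasure (Pr.map T) := Measure.isProbabilityMeasure_map hT.aemeasurable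
  rw [← integral_map hT.aemeasurable (Measurable.of_discrete (f := f)).aestronglyMeasurable,
    integral_fintype Integrable.of_finite]
  refine Finset.sum_congr rfl fun x _ => ?_
  rw [measureReal_def, Measure.map_apply hT (MeasurableSet.singleton x)]
  have hset : T ⁻¹' {x} = {ω | T ω = x} := by
    ext ω; simp
  rw [hset, hp x, smul_eq_mul]

private lemma net_arg {α : Type} [Fintype α] (μ : α → ℝ) (hμ0 : ∀ x, 0 ≤ μ x)
    (hμ1 : ∑ x, μ x = 1) (Hs : Submodule ℝ (α → ℝ)) (κ : ℝ) (hκ : 1 ≤ κ)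
    (hlev : ∀ f ∈ Hs, ∀ x, |f x| ≤ Real.sqrt κ * Real.sqrt (∑ x', μ x' * f x' ^ 2))
    (C : Finset (α → ℝ))
    (hCsub : ∀ f ∈ C, f ∈ Hs ∧ Real.sqrt (∑ x, μ x * f x ^ 2) ≤ 1)
    (hCnet : ∀ f ∈ Hs, Real.sqrt (∑ x, μ x * f x ^ 2) ≤ 1 →
      ∃ g ∈ C, Real.sqrt (∑ x, μ x * (f x - g x) ^ 2) ≤ 1 / 8)
    (n : ℕ) (hn : 0 < n) (z : Fin n → α) (ε : ℝ)
    (hgood : ∀ g ∈ C, ∀ g' ∈ C,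
      |(n : ℝ)⁻¹ * ∑ i, g (z i) * g' (z i) - ∑ x, μ x * g x * g' x| ≤ ε) :
    ∀ u ∈ Hs, ∀ v ∈ Hs,
      |(n : ℝ)⁻¹ * ∑ i, u (z i) * v (z i) - ∑ x, μ x * u x * v x| ≤
        (4 / 3 * ε) * Real.sqrt (∑ x, μ x * u x ^ 2) * Real.sqrt (∑ x, μ x * v x ^ 2) := by
  classical
  set D : (α → ℝ) → (α → ℝ) → ℝ := fun u v =>
    (n : ℝ)⁻¹ * ∑ i, u (z i) * v (z i) - ∑ x, μ x * u x * v x with hD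
  set nrm : (α → ℝ) → ℝ := fun u => Real.sqrt (∑ x, μ x * u x ^ 2) with hnrm
  have hsum_nonneg : ∀ u : α → ℝ, 0 ≤ ∑ x, μ x * u x ^ 2 := fun u =>
    Finset.sum_nonneg fun x _ => mul_nonneg (hμ0 x) (sq_nonneg _)
  have hnrm_nonneg : ∀ u, 0 ≤ nrm u := fun u => Real.sqrt_nonneg _
  have hκ0 : (0:ℝ) ≤ κ := le_trans zero_le_one hκ
  have hsqκ : Real.sqrt κ * Real.sqrt κ = κ := Real.mul_self_sqrt hκ0
  -- pointwise bound
  have hpt : ∀ u ∈ Hs, ∀ x, |u x| ≤ Real.sqrt κ * nrm u := fun u hu x => hlev u hu x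
  -- D symmetric
  have hDcomm : ∀ u v, D u v = D v u := by
    intro u v
    simp only [hD]
    congr 1
    · congr 1; exact Finset.sum_congr rfl fun i _ => mul_comm _ _
    · exact Finset.sum_congr rfl fun x _ => by ring
  have hDsub : ∀ u w v : α → ℝ, D (u - w) v = D u v - D w v := by
    intro u w v
    simp only [hD, Pi.sub_apply, sub_mul, mul_sub, Finset.sum_sub_distrib]
    ring
  have hDsmul : ∀ (c : ℝ) (u v : α → ℝ), D (c • u) v = c * D u v := by
    intro c u v
    have e1 : ∑ i, (c • u) (z i) * v (z i) = c * ∑ i, u (z i) * v (z i) := by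
      rw [Finset.mul_sum]
      exact Finset.sum_congr rfl fun i _ => by simp only [Pi.smul_apply, smul_eq_mul]; ring
    have e2 : ∑ x, μ x * (c • u) x * v x = c * ∑ x, μ x * u x * v x := by
      rw [Finset.mul_sum]
      exact Finset.sum_congr rfl fun x _ => by simp only [Pi.smul_apply, smul_eq_mul]; ring
    simp only [hD, e1, e2]
    ring
  have hnrm_smul : ∀ (c : ℝ) (u : α → ℝ), nrm (c • u) = |c| * nrm u := by
    intro c u
    simp only [hnrm, Pi.smul_apply, smul_eq_mul, mul_pow]
    have : ∀ x : α, μ x * (c ^ 2 * u x ^ 2) = c ^ 2 * (μ x * u x ^ 2) := fun x => by ring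
    rw [Finset.sum_congr rfl fun x _ => this x, ← Finset.mul_sum,
      Real.sqrt_mul (sq_nonneg c), Real.sqrt_sq_eq_abs]
  -- ball bound
  have hDbound : ∀ u ∈ Hs, ∀ v ∈ Hs, nrm u ≤ 1 → nrm v ≤ 1 → |D u v| ≤ 2 * κ := by
    intro u hu v hv hu1 hv1
    have habs_u : ∀ x, |u x| ≤ Real.sqrt κ := fun x =>
      (hpt u hu x).trans (by nlinarith [Real.sqrt_nonneg κ, hnrm_nonneg u])
    have habs_v : ∀ x, |v x| ≤ Real.sqrt κ := fun x =>
      (hpt v hv x).trans (by nlinarith [Real.sqrt_nonneg κ, hnrm_nonneg v])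
    have h1 : |(n : ℝ)⁻¹ * ∑ i, u (z i) * v (z i)| ≤ κ := by
      rw [abs_mul, abs_inv, Nat.abs_cast]
      have hsumab : |∑ i, u (z i) * v (z i)| ≤ (n : ℝ) * κ := by
        calc |∑ i, u (z i) * v (z i)| ≤ ∑ i, |u (z i) * v (z i)| := Finset.abs_sum_le_sum_abs _ _
          _ ≤ ∑ _i : Fin n, κ := Finset.sum_le_sum fun i _ => by
              rw [abs_mul]
              calc |u (z i)| * |v (z i)| ≤ Real.sqrt κ * Real.sqrt κ :=
                    mul_le_mul (habs_u _) (habs_v _) (abs_nonneg _) (Real.sqrt_nonneg _)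
                _ = κ := hsqκ
          _ = (n : ℝ) * κ := by simp [mul_comm]
      have hnpos : (0:ℝ) < n := Nat.cast_pos.mpr hn
      calc ((n:ℝ))⁻¹ * |∑ i, u (z i) * v (z i)| ≤ ((n:ℝ))⁻¹ * ((n:ℝ) * κ) := by
            apply mul_le_mul_of_nonneg_left hsumab (by positivity)
        _ = κ := by field_simp
    have h2 : |∑ x, μ x * u x * v x| ≤ κ := by
      calc |∑ x, μ x * u x * v x| ≤ ∑ x, |μ x * u x * v x| := Finset.abs_sum_le_sum_abs _ _
        _ ≤ ∑ x, μ x * κ := Finset.sum_le_sum fun x _ => by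
            rw [abs_mul, abs_mul, abs_of_nonneg (hμ0 x), mul_assoc]
            apply mul_le_mul_of_nonneg_left _ (hμ0 x)
            calc |u x| * |v x| ≤ Real.sqrt κ * Real.sqrt κ :=
                  mul_le_mul (habs_u _) (habs_v _) (abs_nonneg _) (Real.sqrt_nonneg _)
              _ = κ := hsqκ
        _ = κ := by rw [← Finset.sum_mul, hμ1, one_mul]
    calc |D u v| ≤ |(n : ℝ)⁻¹ * ∑ i, u (z i) * v (z i)| + |∑ x, μ x * u x * v x| := abs_sub _ _
      _ ≤ 2 * κ := by linarith
  -- the sup over the ball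
  set S : Set ℝ := {r : ℝ | ∃ u v : α → ℝ, u ∈ Hs ∧ v ∈ Hs ∧ nrm u ≤ 1 ∧ nrm v ≤ 1 ∧
    r = |D u v|} with hS
  have hnrm_zero : nrm 0 = 0 := by
    simp [hnrm]
  have h0S : (0 : ℝ) ∈ S := by
    refine ⟨0, 0, Submodule.zero_mem _, Submodule.zero_mem _, by rw [hnrm_zero]; norm_num,
      by rw [hnrm_zero]; norm_num, ?_⟩
    simp [hD]
  have hbdd : BddAbove S := by
    refine ⟨2 * κ, fun r hr => ?_⟩
    obtain ⟨u, v, hu, hv, h1, h2, rfl⟩ := hr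
    exact hDbound u hu v hv h1 h2
  set M : ℝ := sSup S with hM
  have hM0 : 0 ≤ M := le_csSup hbdd h0S
  have hmem : ∀ u ∈ Hs, ∀ v ∈ Hs, nrm u ≤ 1 → nrm v ≤ 1 → |D u v| ≤ M :=
    fun u hu v hv h1 h2 => le_csSup hbdd ⟨u, v, hu, hv, h1, h2, rfl⟩
  have hεnn : 0 ≤ ε := by
    obtain ⟨g0, hg0, -⟩ := hCnet 0 (Submodule.zero_mem _) (by simp)
    exact le_trans (abs_nonneg _) (hgood g0 hg0 g0 hg0)
  have hsubnrm : ∀ u g : α → ℝ, Real.sqrt (∑ x, μ x * (u x - g x) ^ 2) = nrm (u - g) := by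
    intro u g; simp [hnrm]
  have claim : ∀ u ∈ Hs, ∀ v ∈ Hs, nrm u ≤ 1 → nrm v ≤ 1 → |D u v| ≤ ε + M / 4 := by
    intro u hu v hv hu1 hv1
    obtain ⟨g, hgC, hgu⟩ := hCnet u hu hu1
    obtain ⟨g', hgC', hgv⟩ := hCnet v hv hv1
    rw [hsubnrm] at hgu hgv
    obtain ⟨hgHs, hg1⟩ := hCsub g hgC
    obtain ⟨hgHs', hg1'⟩ := hCsub g' hgC'
    have hsubHs : u - g ∈ Hs := Submodule.sub_mem _ hu hgHs
    have hsubHs' : v - g' ∈ Hs := Submodule.sub_mem _ hv hgHs'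
    -- first residual
    have hres1 : |D u v - D g v| ≤ M / 8 := by
      have hwHs : (8:ℝ) • (u - g) ∈ Hs := Submodule.smul_mem _ _ hsubHs
      have hwnrm : nrm ((8:ℝ) • (u - g)) ≤ 1 := by
        rw [hnrm_smul]
        rw [abs_of_pos (by norm_num : (0:ℝ) < 8)]
        linarith
      have h1 := hmem _ hwHs v hv hwnrm hv1
      rw [hDsmul] at h1
      rw [hDsub] at h1
      rw [abs_mul, abs_of_pos (by norm_num : (0:ℝ) < 8)] at h1
      linarith
    -- second residual
    have hres2 : |D g v - D g g'| ≤ M / 8 := by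
      have hwHs : (8:ℝ) • (v - g') ∈ Hs := Submodule.smul_mem _ _ hsubHs'
      have hwnrm : nrm ((8:ℝ) • (v - g')) ≤ 1 := by
        rw [hnrm_smul]
        rw [abs_of_pos (by norm_num : (0:ℝ) < 8)]
        linarith
      have h1 := hmem _ hwHs g hgHs hwnrm hg1
      rw [hDsmul, hDsub] at h1
      rw [abs_mul, abs_of_pos (by norm_num : (0:ℝ) < 8)] at h1
      rw [hDcomm v g, hDcomm g' g] at h1
      linarith
    have hnet : |D g g'| ≤ ε := hgood g hgC g' hgC'
    have htri : |D u v| ≤ |D u v - D g v| + |D g v - D g g'| + |D g g'| := by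
      have h1 := abs_add_le (D u v - D g v + (D g v - D g g')) (D g g')
      have h2 := abs_add_le (D u v - D g v) (D g v - D g g')
      have he : D u v - D g v + (D g v - D g g') + D g g' = D u v := by ring
      rw [he] at h1
      linarith
    linarith
  have hMle : M ≤ ε + M / 4 := by
    apply Real.sSup_le _ (by linarith)
    intro r hr
    obtain ⟨u, v, hu, hv, h1, h2, rfl⟩ := hr
    exact claim u hu v hv h1 h2
  have hM43 : M ≤ 4 / 3 * ε := by linarith
  -- conclude
  intro u hu v hv
  show |D u v| ≤ 4 / 3 * ε * nrm u * nrm v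
  rcases eq_or_lt_of_le (hnrm_nonneg u) with h0u | h0u
  · have hux : ∀ x, u x = 0 := by
      intro x
      have := hpt u hu x
      rw [← h0u, mul_zero] at this
      exact abs_eq_zero.mp (le_antisymm this (abs_nonneg _))
    have e1 : ∑ i, u (z i) * v (z i) = 0 :=
      Finset.sum_eq_zero fun i _ => by rw [hux (z i), zero_mul]
    have e2 : ∑ x, μ x * u x * v x = 0 :=
      Finset.sum_eq_zero fun x _ => by rw [hux x, mul_zero, zero_mul]
    have : D u v = 0 := by simp only [hD, e1, e2]; simp
    rw [this, ← h0u, abs_zero, mul_zero, zero_mul]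
  rcases eq_or_lt_of_le (hnrm_nonneg v) with h0v | h0v
  · have hvx : ∀ x, v x = 0 := by
      intro x
      have := hpt v hv x
      rw [← h0v, mul_zero] at this
      exact abs_eq_zero.mp (le_antisymm this (abs_nonneg _))
    have e1 : ∑ i, u (z i) * v (z i) = 0 :=
      Finset.sum_eq_zero fun i _ => by rw [hvx (z i), mul_zero]
    have e2 : ∑ x, μ x * u x * v x = 0 :=
      Finset.sum_eq_zero fun x _ => by rw [hvx x, mul_zero]
    have : D u v = 0 := by simp only [hD, e1, e2]; simp
    rw [this, ← h0v, abs_zero, mul_zero]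
  · have hu1 : (nrm u)⁻¹ • u ∈ Hs := Submodule.smul_mem _ _ hu
    have hv1 : (nrm v)⁻¹ • v ∈ Hs := Submodule.smul_mem _ _ hv
    have hnu : nrm ((nrm u)⁻¹ • u) ≤ 1 := by
      rw [hnrm_smul, abs_of_pos (by positivity), inv_mul_cancel₀ (ne_of_gt h0u)]
    have hnv : nrm ((nrm v)⁻¹ • v) ≤ 1 := by
      rw [hnrm_smul, abs_of_pos (by positivity), inv_mul_cancel₀ (ne_of_gt h0v)]
    have hb := hmem _ hu1 _ hv1 hnu hnv
    have he : D ((nrm u)⁻¹ • u) ((nrm v)⁻¹ • v) = (nrm u)⁻¹ * ((nrm v)⁻¹ * D u v) := by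
      rw [hDsmul, hDcomm u ((nrm v)⁻¹ • v), hDsmul, hDcomm v u]
    rw [he, abs_mul, abs_mul, abs_of_pos (by positivity : (0:ℝ) < (nrm u)⁻¹),
      abs_of_pos (by positivity : (0:ℝ) < (nrm v)⁻¹)] at hb
    have key : |D u v| = nrm u * nrm v * ((nrm u)⁻¹ * ((nrm v)⁻¹ * |D u v|)) := by
      field_simp
    calc |D u v| = nrm u * nrm v * ((nrm u)⁻¹ * ((nrm v)⁻¹ * |D u v|)) := key
      _ ≤ nrm u * nrm v * M := by
          apply mul_le_mul_of_nonneg_left hb (by positivity)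
      _ ≤ nrm u * nrm v * (4 / 3 * ε) := by
          apply mul_le_mul_of_nonneg_left hM43 (by positivity)
      _ = 4 / 3 * ε * nrm u * nrm v := by ring

private lemma pair_tail {Ω : Type*} [MeasurableSpace Ω] (Pr : Measure Ω)
    [IsProbabilityMeasure Pr] {α : Type} [Fintype α] [MeasurableSpace α]
    [DiscreteMeasurableSpace α]
    (n : ℕ) (hn : 0 < n) (V : Fin n → Ω → α) (hVmeas : ∀ i, Measurable (V i))
    (hVindep : iIndepFun V Pr)
    (μ : α → ℝ) (hμ0 : ∀ x, 0 ≤ μ x) (hμ1 : ∑ x, μ x = 1)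
    (hmargV : ∀ i x, (Pr {ω | V i ω = x}).toReal = μ x)
    (κ : ℝ) (hκ : 1 ≤ κ)
    (g g' : α → ℝ) (hg : ∀ x, |g x| ≤ Real.sqrt κ) (hg' : ∀ x, |g' x| ≤ Real.sqrt κ)
    (hg2' : ∑ x, μ x * g' x ^ 2 ≤ 1)
    (L eps : ℝ) (hL : 0 < L)
    (heps : eps = Real.sqrt (2 * κ * L / n) + 4 * κ * L / (3 * n)) :
    Pr {ω | ¬ |(n:ℝ)⁻¹ * ∑ i, g (V i ω) * g' (V i ω) - ∑ x, μ x * g x * g' x| ≤ eps}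
      ≤ ENNReal.ofReal (2 * Real.exp (-L)) := by
  have hκ0 : (0:ℝ) < κ := lt_of_lt_of_le zero_lt_one hκ
  have hnpos : (0:ℝ) < n := Nat.cast_pos.mpr hn
  have hsqκ : Real.sqrt κ * Real.sqrt κ = κ := Real.mul_self_sqrt hκ0.le
  set w : α → ℝ := fun x => g x * g' x with hw
  set m : ℝ := ∑ x, μ x * w x with hm
  have hwbd : ∀ x, |w x| ≤ κ := by
    intro x
    rw [hw, abs_mul, ← hsqκ]
    exact mul_le_mul (hg x) (hg' x) (abs_nonneg _) (Real.sqrt_nonneg _)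
  have hmbd : |m| ≤ κ := by
    rw [hm]
    calc |∑ x, μ x * w x| ≤ ∑ x, |μ x * w x| := Finset.abs_sum_le_sum_abs _ _
      _ ≤ ∑ x, μ x * κ := Finset.sum_le_sum fun x _ => by
          rw [abs_mul, abs_of_nonneg (hμ0 x)]
          exact mul_le_mul_of_nonneg_left (hwbd x) (hμ0 x)
      _ = κ := by rw [← Finset.sum_mul, hμ1, one_mul]
  -- positivity of eps parts
  set a : ℝ := Real.sqrt (2 * κ * L / n) with ha
  set c : ℝ := 4 * κ * L / (3 * n) with hc
  have ha0 : 0 ≤ a := Real.sqrt_nonneg _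
  have hc0 : 0 < c := by rw [hc]; positivity
  have heps0 : 0 ≤ eps := by rw [heps]; positivity
  have ha2 : a ^ 2 = 2 * κ * L / n := Real.sq_sqrt (by positivity)
  -- the exponent inequality
  have hexp_ineq : Real.exp (-((n : ℝ) * eps ^ 2 / (2 * (κ + 2 * κ * eps / 3)))) ≤
      Real.exp (-L) := by
    rw [Real.exp_le_exp, neg_le_neg_iff, le_div_iff₀ (by positivity)]
    have hna : (n:ℝ) * a ^ 2 = 2 * κ * L := by
      rw [ha2]; field_simp
    have hnc : (n:ℝ) * c = 4 * κ * L / 3 := by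
      rw [hc]; field_simp
    rw [heps]
    nlinarith [mul_nonneg (mul_nonneg hnpos.le ha0) hc0.le]
  -- the centered variables
  set Xc : Fin n → Ω → ℝ := fun i ω => w (V i ω) - m with hXc
  set Yc : Fin n → Ω → ℝ := fun i ω => m - w (V i ω) with hYc
  have hXmeas : ∀ i, Measurable (Xc i) :=
    fun i => ((Measurable.of_discrete (f := w)).comp (hVmeas i)).sub measurable_const
  have hYmeas : ∀ i, Measurable (Yc i) :=
    fun i => measurable_const.sub ((Measurable.of_discrete (f := w)).comp (hVmeas i))
  have hXindep : iIndepFun Xc Pr := by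
    have := hVindep.comp (fun _ => fun x : α => w x - m)
      (fun _ => Measurable.of_discrete)
    exact this
  have hYindep : iIndepFun Yc Pr := by
    have := hVindep.comp (fun _ => fun x : α => m - w x)
      (fun _ => Measurable.of_discrete)
    exact this
  have hXbd : ∀ i ω, |Xc i ω| ≤ 2 * κ := by
    intro i ω
    calc |Xc i ω| ≤ |w (V i ω)| + |m| := abs_sub _ _
      _ ≤ 2 * κ := by linarith [hwbd (V i ω), hmbd]
  have hYbd : ∀ i ω, |Yc i ω| ≤ 2 * κ := by
    intro i ω
    rw [hYc]
    calc |m - w (V i ω)| ≤ |m| + |w (V i ω)| := abs_sub _ _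
      _ ≤ 2 * κ := by linarith [hwbd (V i ω), hmbd]
  have hwint : ∀ i, ∫ ω, w (V i ω) ∂Pr = m :=
    fun i => integral_comp_fintype Pr (V i) (hVmeas i) μ (hmargV i) w
  have hwIntegrable : ∀ i, Integrable (fun ω => w (V i ω)) Pr := by
    intro i
    refine (integrable_const κ).mono'
      ((Measurable.of_discrete (f := w)).comp (hVmeas i)).aestronglyMeasurable ?_
    exact Filter.Eventually.of_forall fun ω => by simpa using hwbd (V i ω)
  have hXmean : ∀ i, ∫ ω, Xc i ω ∂Pr = 0 := by
    intro i
    rw [hXc]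
    simp only
    rw [integral_sub (hwIntegrable i) (integrable_const m), hwint i, integral_const]
    simp
  have hYmean : ∀ i, ∫ ω, Yc i ω ∂Pr = 0 := by
    intro i
    rw [hYc]
    simp only
    rw [integral_sub (integrable_const m) (hwIntegrable i), hwint i, integral_const]
    simp
  have hvar_sum : ∑ x, μ x * (w x - m) ^ 2 ≤ κ := by
    have he : ∑ x, μ x * (w x - m) ^ 2 = (∑ x, μ x * w x ^ 2) - m ^ 2 := by
      have : ∀ x : α, μ x * (w x - m) ^ 2
          = μ x * w x ^ 2 - 2 * m * (μ x * w x) + m ^ 2 * μ x := fun x => by ring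
      rw [Finset.sum_congr rfl fun x _ => this x]
      rw [Finset.sum_add_distrib, Finset.sum_sub_distrib, ← Finset.mul_sum, ← Finset.mul_sum,
        hμ1, ← hm]
      ring
    have hw2 : ∑ x, μ x * w x ^ 2 ≤ κ := by
      have hpt : ∀ x : α, μ x * w x ^ 2 ≤ μ x * (κ * g' x ^ 2) := by
        intro x
        apply mul_le_mul_of_nonneg_left _ (hμ0 x)
        have hgx : g x ^ 2 ≤ κ := by
          have := hg x
          nlinarith [abs_nonneg (g x), sq_abs (g x), Real.sqrt_nonneg κ]
        rw [hw]
        calc (g x * g' x) ^ 2 = g x ^ 2 * g' x ^ 2 := by ring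
          _ ≤ κ * g' x ^ 2 := mul_le_mul_of_nonneg_right hgx (sq_nonneg _)
      calc ∑ x, μ x * w x ^ 2 ≤ ∑ x, μ x * (κ * g' x ^ 2) := Finset.sum_le_sum fun x _ => hpt x
        _ = κ * ∑ x, μ x * g' x ^ 2 := by
            rw [Finset.mul_sum]
            exact Finset.sum_congr rfl fun x _ => by ring
        _ ≤ κ * 1 := mul_le_mul_of_nonneg_left hg2' hκ0.le
        _ = κ := mul_one κ
    rw [he]
    nlinarith [sq_nonneg m]
  have hXvar : ∀ i, ∫ ω, (Xc i ω) ^ 2 ∂Pr ≤ κ := by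
    intro i
    have he : ∫ ω, (Xc i ω) ^ 2 ∂Pr = ∑ x, μ x * (w x - m) ^ 2 :=
      integral_comp_fintype Pr (V i) (hVmeas i) μ (hmargV i) (fun x => (w x - m) ^ 2)
    rw [he]
    exact hvar_sum
  have hYvar : ∀ i, ∫ ω, (Yc i ω) ^ 2 ∂Pr ≤ κ := by
    intro i
    have he : ∫ ω, (Yc i ω) ^ 2 ∂Pr = ∑ x, μ x * (m - w x) ^ 2 :=
      integral_comp_fintype Pr (V i) (hVmeas i) μ (hmargV i) (fun x => (m - w x) ^ 2)
    rw [he]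
    have he2 : ∑ x, μ x * (m - w x) ^ 2 = ∑ x, μ x * (w x - m) ^ 2 :=
      Finset.sum_congr rfl fun x _ => by ring
    rw [he2]
    exact hvar_sum
  -- tail bounds
  have hXtail := bernstein_tail Pr n Xc hXmeas hXindep (2 * κ) κ eps hκ0 (by linarith) heps0
    hXbd hXmean hXvar
  have hYtail := bernstein_tail Pr n Yc hYmeas hYindep (2 * κ) κ eps hκ0 (by linarith) heps0
    hYbd hYmean hYvar
  -- convert to ENNReal
  have hXtail' : Pr {ω | (n : ℝ) * eps ≤ ∑ i, Xc i ω} ≤ ENNReal.ofReal (Real.exp (-L)) := by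
    rw [← ENNReal.ofReal_toReal (measure_ne_top Pr _)]
    exact ENNReal.ofReal_le_ofReal (hXtail.trans hexp_ineq)
  have hYtail' : Pr {ω | (n : ℝ) * eps ≤ ∑ i, Yc i ω} ≤ ENNReal.ofReal (Real.exp (-L)) := by
    rw [← ENNReal.ofReal_toReal (measure_ne_top Pr _)]
    exact ENNReal.ofReal_le_ofReal (hYtail.trans hexp_ineq)
  -- the subset relation
  have hsubset : {ω | ¬ |(n:ℝ)⁻¹ * ∑ i, g (V i ω) * g' (V i ω) - ∑ x, μ x * g x * g' x| ≤ eps}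
      ⊆ {ω | (n : ℝ) * eps ≤ ∑ i, Xc i ω} ∪ {ω | (n : ℝ) * eps ≤ ∑ i, Yc i ω} := by
    intro ω hω
    simp only [Set.mem_setOf_eq, not_le] at hω
    have hmm : ∑ x, μ x * g x * g' x = m := by
      rw [hm]
      exact Finset.sum_congr rfl fun x _ => by rw [hw]; ring
    rw [hmm] at hω
    have hXsum : ∑ i, Xc i ω = (∑ i, w (V i ω)) - n * m := by
      rw [hXc]
      simp only
      rw [Finset.sum_sub_distrib]
      simp [mul_comm]
    have hYsum : ∑ i, Yc i ω = n * m - (∑ i, w (V i ω)) := by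
      rw [hYc]
      simp only
      rw [Finset.sum_sub_distrib]
      simp [mul_comm]
    have hws : ∑ i, g (V i ω) * g' (V i ω) = ∑ i, w (V i ω) :=
      Finset.sum_congr rfl fun i _ => by rw [hw]
    rw [hws] at hω
    have hinv : (n:ℝ) * ((n:ℝ)⁻¹ * ∑ i, w (V i ω)) = ∑ i, w (V i ω) := by
      field_simp
    rcases lt_or_ge ((n:ℝ)⁻¹ * ∑ i, w (V i ω) - m) 0 with hsign | hsign
    · -- lower deviation, use Yc
      right
      show (n : ℝ) * eps ≤ ∑ i, Yc i ω
      rw [hYsum]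
      have habs : |(n:ℝ)⁻¹ * ∑ i, w (V i ω) - m| = -((n:ℝ)⁻¹ * ∑ i, w (V i ω) - m) :=
        abs_of_neg hsign
      rw [habs] at hω
      nlinarith [mul_lt_mul_of_pos_left hω hnpos]
    · left
      show (n : ℝ) * eps ≤ ∑ i, Xc i ω
      rw [hXsum]
      have habs : |(n:ℝ)⁻¹ * ∑ i, w (V i ω) - m| = (n:ℝ)⁻¹ * ∑ i, w (V i ω) - m :=
        abs_of_nonneg hsign
      rw [habs] at hω
      nlinarith [mul_lt_mul_of_pos_left hω hnpos]
  calc Pr _ ≤ Pr ({ω | (n : ℝ) * eps ≤ ∑ i, Xc i ω} ∪ {ω | (n : ℝ) * eps ≤ ∑ i, Yc i ω}) :=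
        measure_mono hsubset
    _ ≤ Pr {ω | (n : ℝ) * eps ≤ ∑ i, Xc i ω} + Pr {ω | (n : ℝ) * eps ≤ ∑ i, Yc i ω} :=
        measure_union_le _ _
    _ ≤ ENNReal.ofReal (Real.exp (-L)) + ENNReal.ofReal (Real.exp (-L)) :=
        add_le_add hXtail' hYtail'
    _ = ENNReal.ofReal (2 * Real.exp (-L)) := by
        rw [← ENNReal.ofReal_add (Real.exp_pos _).le (Real.exp_pos _).le]
        congr 1; ring

/-- near-isometry concentration, Lemma on `χ_h`: for `n` i.i.d.
copies of a layered random vector `Z = (Z_1,…,Z_H)` with `Z_h ∼ μ_h`, and subspaces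
`H_h` satisfying the generalized leverage condition with `(1/8)`-nets of cardinality
`N_h`, with probability at least `1 − δ/4`, simultaneously for all `h` and all
`u, v ∈ H_h`, the empirical inner product is `χ_h`-close to `⟨u,v⟩_{μ_h}`; in
particular (taking `u = v`) the empirical second moment is a near isometry. -/
theorem stmt_19 {Ω : Type*} [MeasurableSpace Ω] (Pr : Measure Ω) [IsProbabilityMeasure Pr]
    (Hn n : ℕ) (hHn : 1 ≤ Hn) (hn : 0 < n)
    (δ : ℝ) (hδ : 0 < δ) (hδ1 : δ < 1)
    (X : ℕ → Type) [∀ h, Fintype (X h)] [∀ h, Nonempty (X h)]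
    [∀ h, MeasurableSpace (X h)] [∀ h, DiscreteMeasurableSpace (X h)]
    (μ : ∀ h, X h → ℝ)
    (hμ0 : ∀ h ∈ Icc 1 Hn, ∀ x, 0 ≤ μ h x)
    (hμ1 : ∀ h ∈ Icc 1 Hn, ∑ x, μ h x = 1)
    (Z : Fin n → Ω → ∀ h : ℕ, X h)
    (hZmeas : ∀ i, Measurable (Z i))
    (hindep : iIndepFun Z Pr)
    (hident : ∀ i j, IdentDistrib (Z i) (Z j) Pr Pr)
    (hmarg : ∀ i, ∀ h ∈ Icc 1 Hn, ∀ x : X h,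
      (Pr {ω | Z i ω h = x}).toReal = μ h x)
    (Hs : ∀ h, Submodule ℝ (X h → ℝ))
    (κ : ℕ → ℝ) (hκ : ∀ h ∈ Icc 1 Hn, 1 ≤ κ h)
    (hlev : ∀ h ∈ Icc 1 Hn, ∀ f ∈ Hs h, ∀ x,
      |f x| ≤ Real.sqrt (κ h) * Real.sqrt (∑ x', μ h x' * f x' ^ 2))
    (C : ∀ h, Finset (X h → ℝ)) (N : ℕ → ℕ) (hN : ∀ h, N h = (C h).card)
    (hCsub : ∀ h ∈ Icc 1 Hn, ∀ f ∈ C h,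
      f ∈ Hs h ∧ Real.sqrt (∑ x, μ h x * f x ^ 2) ≤ 1)
    (hCnet : ∀ h ∈ Icc 1 Hn, ∀ f ∈ Hs h, Real.sqrt (∑ x, μ h x * f x ^ 2) ≤ 1 →
      ∃ g ∈ C h, Real.sqrt (∑ x, μ h x * (f x - g x) ^ 2) ≤ 1 / 8)
    (χ : ℕ → ℝ)
    (hχ : ∀ h, χ h = (4 / 3) *
      (Real.sqrt (2 * κ h * Real.log (8 * Hn * (N h : ℝ) ^ 2 / δ) / n) +
        4 * κ h * Real.log (8 * Hn * (N h : ℝ) ^ 2 / δ) / (3 * n))) :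
    (1 : ℝ) - δ / 4 ≤
      (Pr {ω | ∀ h ∈ Icc 1 Hn,
        (∀ u ∈ Hs h, ∀ v ∈ Hs h,
          |(n : ℝ)⁻¹ * ∑ i, u (Z i ω h) * v (Z i ω h) - ∑ x, μ h x * u x * v x| ≤
            χ h * Real.sqrt (∑ x, μ h x * u x ^ 2) *
              Real.sqrt (∑ x, μ h x * v x ^ 2)) ∧
        (∀ u ∈ Hs h,
          (1 - χ h) * ∑ x, μ h x * u x ^ 2 ≤ (n : ℝ)⁻¹ * ∑ i, u (Z i ω h) ^ 2 ∧
          (n : ℝ)⁻¹ * ∑ i, u (Z i ω h) ^ 2 ≤ (1 + χ h) * ∑ x, μ h x * u x ^ 2)}).toReal := by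
  classical
  set L : ℕ → ℝ := fun h => Real.log (8 * Hn * (N h : ℝ) ^ 2 / δ) with hLdef
  set eps : ℕ → ℝ := fun h => Real.sqrt (2 * κ h * L h / n) + 4 * κ h * L h / (3 * n)
    with hepsdef
  have hχε : ∀ h, χ h = 4 / 3 * eps h := fun h => by rw [hχ h, hepsdef]
  have hNpos : ∀ h ∈ Icc 1 Hn, 0 < N h := by
    intro h hh
    obtain ⟨g0, hg0, -⟩ := hCnet h hh 0 (Submodule.zero_mem _) (by simp)
    rw [hN h]
    exact Finset.card_pos.mpr ⟨g0, hg0⟩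
  have hLpos : ∀ h ∈ Icc 1 Hn, 0 < L h := by
    intro h hh
    apply Real.log_pos
    have h1 : (1:ℝ) ≤ Hn := by exact_mod_cast hHn
    have h2 : (1:ℝ) ≤ N h := by exact_mod_cast hNpos h hh
    rw [lt_div_iff₀ hδ]
    nlinarith
  -- the bad events
  set bad : (h : ℕ) → (X h → ℝ) → (X h → ℝ) → Set Ω := fun h g g' =>
    {ω | ¬ |(n : ℝ)⁻¹ * ∑ i, g (Z i ω h) * g' (Z i ω h) - ∑ x, μ h x * g x * g' x| ≤ eps h}
    with hbaddef
  set Bad : Set Ω := ⋃ h ∈ Icc 1 Hn, ⋃ g ∈ C h, ⋃ g' ∈ C h, bad h g g' with hBaddef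
  have hbadmeas : ∀ h g g', MeasurableSet (bad h g g') := by
    intro h g g'
    have hf : Measurable fun ω =>
        (n : ℝ)⁻¹ * ∑ i, g (Z i ω h) * g' (Z i ω h) - ∑ x, μ h x * g x * g' x := by
      apply Measurable.sub _ measurable_const
      apply Measurable.const_mul
      apply Finset.measurable_sum
      intro i _
      exact ((Measurable.of_discrete (f := g)).comp
        ((measurable_pi_apply h).comp (hZmeas i))).mul
        ((Measurable.of_discrete (f := g')).comp ((measurable_pi_apply h).comp (hZmeas i)))
    exact (measurableSet_le hf.abs measurable_const).compl
  have hBadmeas : MeasurableSet Bad := by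
    rw [hBaddef]
    refine Finset.measurableSet_biUnion _ fun h _ => ?_
    refine Finset.measurableSet_biUnion _ fun g _ => ?_
    refine Finset.measurableSet_biUnion _ fun g' _ => ?_
    exact hbadmeas h g g'
  -- per-pair bound
  have hpair : ∀ h ∈ Icc 1 Hn, ∀ g ∈ C h, ∀ g' ∈ C h,
      Pr (bad h g g') ≤ ENNReal.ofReal (δ / (4 * Hn * (N h : ℝ) ^ 2)) := by
    intro h hh g hg g' hg'
    have hκh := hκ h hh
    obtain ⟨hgHs, hgn⟩ := hCsub h hh g hg
    obtain ⟨hgHs', hgn'⟩ := hCsub h hh g' hg'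
    have hsumnn : ∀ f : X h → ℝ, 0 ≤ ∑ x, μ h x * f x ^ 2 := fun f =>
      Finset.sum_nonneg fun x _ => mul_nonneg (hμ0 h hh x) (sq_nonneg _)
    have hb : ∀ x, |g x| ≤ Real.sqrt (κ h) := by
      intro x
      refine (hlev h hh g hgHs x).trans ?_
      exact mul_le_of_le_one_right (Real.sqrt_nonneg _) hgn
    have hb' : ∀ x, |g' x| ≤ Real.sqrt (κ h) := by
      intro x
      refine (hlev h hh g' hgHs' x).trans ?_
      exact mul_le_of_le_one_right (Real.sqrt_nonneg _) hgn'
    have hg2' : ∑ x, μ h x * g' x ^ 2 ≤ 1 := by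
      have h1 := Real.sq_sqrt (hsumnn g')
      nlinarith [Real.sqrt_nonneg (∑ x, μ h x * g' x ^ 2)]
    have hVindep : iIndepFun (fun i => fun ω => Z i ω h) Pr :=
      hindep.comp (fun _ => fun z => z h) (fun _ => measurable_pi_apply h)
    have htail := pair_tail Pr n hn (fun i ω => Z i ω h)
      (fun i => (measurable_pi_apply h).comp (hZmeas i)) hVindep (μ h) (hμ0 h hh) (hμ1 h hh)
      (fun i x => hmarg i h hh x) (κ h) hκh g g' hb hb' hg2' (L h) (eps h) (hLpos h hh)
      (by rw [hepsdef])
    refine le_trans htail (le_of_eq ?_)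
    congr 1
    have hxpos : (0:ℝ) < 8 * Hn * (N h : ℝ) ^ 2 / δ := by
      have h1 : (1:ℝ) ≤ Hn := by exact_mod_cast hHn
      have h2 : (1:ℝ) ≤ N h := by exact_mod_cast hNpos h hh
      positivity
    rw [hLdef]
    simp only
    rw [Real.exp_neg, Real.exp_log hxpos]
    have h1 : (0:ℝ) < Hn := by exact_mod_cast hHn
    have h2 : (0:ℝ) < N h := by exact_mod_cast hNpos h hh
    field_simp
    ring
  -- union bound
  have hBadbound : Pr Bad ≤ ENNReal.ofReal (δ / 4) := by
    have h1 : (0:ℝ) < Hn := by exact_mod_cast hHn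
    calc Pr Bad ≤ ∑ h ∈ Icc 1 Hn, Pr (⋃ g ∈ C h, ⋃ g' ∈ C h, bad h g g') :=
          measure_biUnion_finset_le _ _
      _ ≤ ∑ h ∈ Icc 1 Hn, ENNReal.ofReal (δ / (4 * Hn)) := by
          refine Finset.sum_le_sum fun h hh => ?_
          have h2 : (0:ℝ) < N h := by exact_mod_cast hNpos h hh
          calc Pr (⋃ g ∈ C h, ⋃ g' ∈ C h, bad h g g')
              ≤ ∑ g ∈ C h, Pr (⋃ g' ∈ C h, bad h g g') := measure_biUnion_finset_le _ _
            _ ≤ ∑ g ∈ C h, ∑ g' ∈ C h, Pr (bad h g g') :=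
                Finset.sum_le_sum fun g _ => measure_biUnion_finset_le _ _
            _ ≤ ∑ g ∈ C h, ∑ g' ∈ C h, ENNReal.ofReal (δ / (4 * Hn * (N h : ℝ) ^ 2)) :=
                Finset.sum_le_sum fun g hg => Finset.sum_le_sum fun g' hg' =>
                  hpair h hh g hg g' hg'
            _ = ((N h : ℝ≥0∞) * ((N h : ℝ≥0∞) *
                  ENNReal.ofReal (δ / (4 * Hn * (N h : ℝ) ^ 2)))) := by
                simp [Finset.sum_const, ← hN h, nsmul_eq_mul, mul_assoc]
            _ = ENNReal.ofReal (δ / (4 * Hn)) := by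
                rw [← ENNReal.ofReal_natCast (N h), ← ENNReal.ofReal_mul (by positivity),
                  ← ENNReal.ofReal_mul (by positivity)]
                congr 1
                field_simp
      _ = ENNReal.ofReal (δ / 4) := by
          rw [Finset.sum_const, Nat.card_Icc]
          simp only [Nat.add_sub_cancel, nsmul_eq_mul]
          rw [← ENNReal.ofReal_natCast Hn, ← ENNReal.ofReal_mul (by positivity)]
          congr 1
          field_simp
  -- the good event implies the conclusion
  have hsubset : Badᶜ ⊆ {ω | ∀ h ∈ Icc 1 Hn,
      (∀ u ∈ Hs h, ∀ v ∈ Hs h,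
        |(n : ℝ)⁻¹ * ∑ i, u (Z i ω h) * v (Z i ω h) - ∑ x, μ h x * u x * v x| ≤
          χ h * Real.sqrt (∑ x, μ h x * u x ^ 2) * Real.sqrt (∑ x, μ h x * v x ^ 2)) ∧
      (∀ u ∈ Hs h,
        (1 - χ h) * ∑ x, μ h x * u x ^ 2 ≤ (n : ℝ)⁻¹ * ∑ i, u (Z i ω h) ^ 2 ∧
        (n : ℝ)⁻¹ * ∑ i, u (Z i ω h) ^ 2 ≤ (1 + χ h) * ∑ x, μ h x * u x ^ 2)} := by
    intro ω hω
    simp only [hBaddef, Set.mem_compl_iff, Set.mem_iUnion, not_exists] at hω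
    have hgoodω : ∀ h ∈ Icc 1 Hn, ∀ g ∈ C h, ∀ g' ∈ C h,
        |(n : ℝ)⁻¹ * ∑ i, g (Z i ω h) * g' (Z i ω h) - ∑ x, μ h x * g x * g' x| ≤ eps h := by
      intro h hh g hg g' hg'
      by_contra hc
      exact hω h hh g hg g' hg' hc
    simp only [Set.mem_setOf_eq]
    intro h hh
    have hfirst := net_arg (μ h) (hμ0 h hh) (hμ1 h hh) (Hs h) (κ h) (hκ h hh)
      (hlev h hh) (C h) (hCsub h hh) (hCnet h hh) n hn (fun i => Z i ω h) (eps h)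
      (hgoodω h hh)
    constructor
    · intro u hu v hv
      rw [hχε h]
      exact hfirst u hu v hv
    · intro u hu
      have h2 := hfirst u hu u hu
      have e1 : ∑ i, u (Z i ω h) * u (Z i ω h) = ∑ i, u (Z i ω h) ^ 2 :=
        Finset.sum_congr rfl fun i _ => (pow_two _).symm
      have e2 : ∑ x, μ h x * u x * u x = ∑ x, μ h x * u x ^ 2 :=
        Finset.sum_congr rfl fun x _ => by ring
      have hsnn : 0 ≤ ∑ x, μ h x * u x ^ 2 :=
        Finset.sum_nonneg fun x _ => mul_nonneg (hμ0 h hh x) (sq_nonneg _)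
      have e3 : (4 / 3 * eps h) * Real.sqrt (∑ x, μ h x * u x ^ 2) *
          Real.sqrt (∑ x, μ h x * u x ^ 2) = (4 / 3 * eps h) * ∑ x, μ h x * u x ^ 2 := by
        rw [mul_assoc, Real.mul_self_sqrt hsnn]
      rw [e1, e2, e3] at h2
      have h3 := abs_le.mp h2
      rw [hχε h]
      constructor <;> linarith [h3.1, h3.2]
  -- conclude
  have hmono : Pr Badᶜ ≤ Pr _ := measure_mono hsubset
  have hcompl : Pr Badᶜ = 1 - Pr Bad := prob_compl_eq_one_sub hBadmeas
  have hBadReal : (Pr Bad).toReal ≤ δ / 4 := by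
    have := ENNReal.toReal_mono ENNReal.ofReal_ne_top hBadbound
    rwa [ENNReal.toReal_ofReal (by positivity)] at this
  have hcomplReal : (Pr Badᶜ).toReal = 1 - (Pr Bad).toReal := by
    rw [hcompl, ENNReal.toReal_sub_of_le prob_le_one ENNReal.one_ne_top, ENNReal.toReal_one]
  have hfinal := ENNReal.toReal_mono (measure_ne_top Pr _) hmono
  rw [hcomplReal] at hfinal
  linarith
end
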